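/- arXiv:1001.2156 — 12 statements merged into one kernel-verified Lean document; each statement's English description precedes it below -/
import Mathlib

section
/- For every power q = 3^f with f ≥ 1 of 3, the sum ∑_{k=0}^{q-1} C(2k,k) is divisible by q. -/
/-!
Let `E_i(x) = (1 - 4x) ^ (-(2i+1)/2)`, so that `E_0 = ∑ C(2k,k) x^k` and
`E_{i+1} = E_i / (1 - 4x)`.
Since `(1 - 4x) / (1 - x) = 1 - 3x / (1 - x)`, the partial sums of the coefficients of `E_i` are
coefficients of `E_{i+1}` minus three times partial sums for `E_{i+1}`. Iterating this `f` times
writes `∑_{k<q} C(2k,k)`, `q = 3^f`, as `∑_{j<f} (-3)^j [x^(q-j-1)] E_{j+1}` plus a multiple of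
`3^f`. The closed form `C(2i,i) [x^n] E_i = C(2(n+i),n+i) C(n+i,i)` gives
`i C(2i,i) [x^(q-i)] E_i = q C(2q,q) C(q-1,i-1)`, and `i C(2i,i) ≤ 2i² < 3^i` bounds its
`3`-adic valuation by `i - 1`, so `3^f` divides `3^(i-1) [x^(q-i)] E_i`.
-/

open Finset Nat

/-- `invSqrtPowCoeff i n` is the coefficient of `x ^ n` in `(1 - 4x) ^ (-(2i+1)/2)`. -/
def invSqrtPowCoeff : ℕ → ℕ → ℕ
  | 0, n => centralBinom n
  | _ + 1, 0 => 1
  | i + 1, n + 1 => 4 * invSqrtPowCoeff (i + 1) n + invSqrtPowCoeff i (n + 1)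

@[simp]
lemma invSqrtPowCoeff_zero_left (n : ℕ) : invSqrtPowCoeff 0 n = centralBinom n := by
  rw [invSqrtPowCoeff]

@[simp]
lemma invSqrtPowCoeff_zero_right (i : ℕ) : invSqrtPowCoeff i 0 = 1 := by
  cases i <;> simp [invSqrtPowCoeff]

lemma invSqrtPowCoeff_succ_succ (i n : ℕ) :
    invSqrtPowCoeff (i + 1) (n + 1) =
      4 * invSqrtPowCoeff (i + 1) n + invSqrtPowCoeff i (n + 1) := by
  rw [invSqrtPowCoeff]

lemma centralBinom_mul_invSqrtPowCoeff (i n : ℕ) :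
    centralBinom i * invSqrtPowCoeff i n = centralBinom (n + i) * (n + i).choose i := by
  induction i generalizing n with
  | zero => simp
  | succ i ih =>
    induction n with
    | zero => simp
    | succ n ihn =>
      have hcb_i := succ_mul_centralBinom_succ i
      have hcb_a := succ_mul_centralBinom_succ (n + i + 1)
      have hchoose_succ := add_one_mul_choose_eq (n + i + 1) i
      have hchoose_right := choose_succ_right_eq (n + i + 1) i
      have ih_succ := ih (n + 1)
      rw [show n + 1 + i = n + i + 1 by ring] at ih_succ
      rw [show n + (i + 1) = n + i + 1 by ring] at ihn
      rw [show n + i + 1 - i = n + 1 by omega] at hchoose_right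
      rw [show n + 1 + (i + 1) = n + i + 1 + 1 by ring, invSqrtPowCoeff_succ_succ]
      -- clearing the denominators of the four ratio recurrences makes this a polynomial identity
      apply Nat.eq_of_mul_eq_mul_left (show 0 < (i + 1) * (n + i + 2) by positivity)
      zify at *
      linear_combination 4 * (i + 1) * (n + i + 2) * ihn
        + 4 * (n + i + 2) * ((n + i + 1).centralBinom : ℤ) * hchoose_right
        + (n + i + 2) * (invSqrtPowCoeff i (n + 1) : ℤ) * hcb_i
        + 2 * (2 * i + 1) * (n + i + 2) * ih_succ
        - (i + 1) * ((n + i + 1 + 1).choose (i + 1) : ℤ) * hcb_a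
        + 2 * (2 * (n + i + 1) + 1) * ((n + i + 1).centralBinom : ℤ) * hchoose_succ

lemma sum_range_succ_invSqrtPowCoeff_add (i n : ℕ) :
    ∑ j ∈ range (n + 1), invSqrtPowCoeff i j +
        3 * ∑ j ∈ range n, invSqrtPowCoeff (i + 1) j = invSqrtPowCoeff (i + 1) n := by
  induction n with
  | zero => simp
  | succ n ih =>
    rw [sum_range_succ, sum_range_succ (invSqrtPowCoeff (i + 1)), invSqrtPowCoeff_succ_succ]
    omega

lemma sum_range_centralBinom_eq_sum_add_mul (m n : ℕ) (hmn : m ≤ n) :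
    (∑ j ∈ range n, centralBinom j : ℤ) =
      ∑ j ∈ range m, (-3) ^ j * (invSqrtPowCoeff (j + 1) (n - (j + 1)) : ℤ) +
        (-3) ^ m * ∑ j ∈ range (n - m), (invSqrtPowCoeff m j : ℤ) := by
  induction m with
  | zero => simp
  | succ m ih =>
    have hstep := sum_range_succ_invSqrtPowCoeff_add m (n - (m + 1))
    rw [show n - (m + 1) + 1 = n - m by omega] at hstep
    rw [ih (by omega), sum_range_succ]
    zify at hstep
    linear_combination (-3) ^ m * hstep

lemma two_mul_sq_lt_three_pow (i : ℕ) : 2 * i ^ 2 < 3 ^ i := by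
  induction i with
  | zero => norm_num
  | succ i ih =>
    rcases Nat.lt_or_ge i 2 with hi | hi
    · interval_cases i <;> norm_num
    · nlinarith [pow_succ 3 i]

lemma factorization_mul_centralBinom_lt {p i : ℕ} (hp : p.Prime) (hp3 : 3 ≤ p) (hi : i ≠ 0) :
    (i * centralBinom i).factorization p < i := by
  have hvi : p ^ i.factorization p ≤ i := Nat.ordProj_le p hi
  have hvc : p ^ (centralBinom i).factorization p ≤ 2 * i := by
    rw [centralBinom_eq_two_mul_choose]
    exact pow_factorization_choose_le (by omega)
  rw [← Nat.pow_lt_pow_iff_right hp.one_lt, Nat.factorization_mul hi (centralBinom_ne_zero i),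
    Finsupp.add_apply, pow_add]
  calc p ^ i.factorization p * p ^ (centralBinom i).factorization p
      ≤ i * (2 * i) := Nat.mul_le_mul hvi hvc
    _ < 3 ^ i := by nlinarith [two_mul_sq_lt_three_pow i]
    _ ≤ p ^ i := Nat.pow_le_pow_left hp3 i

lemma pow_dvd_pow_mul_of_pow_dvd_mul {p a b f j : ℕ} (hp : p.Prime) (ha : a ≠ 0)
    (hj : a.factorization p ≤ j) (h : p ^ f ∣ a * b) : p ^ f ∣ p ^ j * b := by
  rw [← Nat.ordProj_mul_ordCompl_eq_self a p, mul_right_comm] at h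
  exact ((Nat.coprime_ordCompl hp ha).pow_left f).dvd_of_dvd_mul_right h
    |>.trans (mul_dvd_mul_right (pow_dvd_pow p hj) b)

lemma pow_dvd_pow_mul_invSqrtPowCoeff {p : ℕ} (hp : p.Prime) (hp3 : 3 ≤ p) (f j : ℕ)
    (hj : j < p ^ f) : p ^ f ∣ p ^ j * invSqrtPowCoeff (j + 1) (p ^ f - (j + 1)) := by
  have hclosed := centralBinom_mul_invSqrtPowCoeff (j + 1) (p ^ f - (j + 1))
  rw [show p ^ f - (j + 1) + (j + 1) = p ^ f by omega] at hclosed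
  have hchoose : (j + 1) * (p ^ f).choose (j + 1) = p ^ f * (p ^ f - 1).choose j := by
    have := add_one_mul_choose_eq (p ^ f - 1) j
    rw [show p ^ f - 1 + 1 = p ^ f by omega] at this
    rw [this, mul_comm]
  refine pow_dvd_pow_mul_of_pow_dvd_mul hp
    (Nat.mul_ne_zero j.succ_ne_zero (centralBinom_ne_zero _))
    (Nat.lt_succ_iff.mp (factorization_mul_centralBinom_lt hp hp3 j.succ_ne_zero))
    ⟨centralBinom (p ^ f) * (p ^ f - 1).choose j, ?_⟩
  rw [mul_assoc, hclosed, mul_left_comm, hchoose, mul_left_comm]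

theorem three_pow_dvd_sum_range_centralBinom (f : ℕ) :
    3 ^ f ∣ ∑ k ∈ range (3 ^ f), centralBinom k := by
  rw [← Int.natCast_dvd_natCast, Nat.cast_sum,
    sum_range_centralBinom_eq_sum_add_mul f (3 ^ f) (Nat.lt_pow_self (by norm_num)).le]
  have h3f : ((3 ^ f : ℕ) : ℤ) ∣ (-3) ^ f := by
    rw [neg_pow]; push_cast; exact dvd_mul_left _ _
  refine dvd_add (dvd_sum fun j hj => ?_) (dvd_mul_of_dvd_left h3f _)
  have := pow_dvd_pow_mul_invSqrtPowCoeff Nat.prime_three le_rfl f j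
    ((mem_range.mp hj).trans (Nat.lt_pow_self (by norm_num)))
  rw [neg_pow, mul_assoc]
  exact Dvd.dvd.mul_left (by exact_mod_cast this) _

theorem stmt_1_general (f : ℕ) (q : ℕ) (hq : q = 3 ^ f) :
    q ∣ ∑ k ∈ Finset.range q, (2 * k).choose k := by
  simpa [hq, centralBinom_eq_two_mul_choose] using three_pow_dvd_sum_range_centralBinom f

theorem stmt_1 (f : ℕ) (hf : 1 ≤ f) (q : ℕ) (hq : q = 3 ^ f) :
    q ∣ ∑ k ∈ Finset.range q, (2 * k).choose k :=
  stmt_1_general f q hq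
end

section
/- For every positive integer n, the identity ∑_{k=0}^{n-1} C(2k,k) = n·C(2n,n)·∑_{k=1}^{n} ((-3)^{k-1}/k)·C(2k,k)^{-1}·C(n-1,k-1) holds as an identity of rational numbers. -/
/-!
With `n = m + 1`, `cⱼ = (-3)ʲ / ((j + 1) C(2j + 2, j + 1))` and `T m = ∑_{j ≤ m} cⱼ C(m, j)`,
the claim reads `∑_{k ≤ m} C(2k, k) = (m + 1) C(2m + 2, m + 1) T m`. Since
`(m + 1) C(2m + 2, m + 1) = 2 (2m + 1) C(2m, m)`, induction on `m` reduces it to the recurrence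
`2 (2m + 3) T (m + 1) = (m + 1) T m + 1`. By Pascal's rule the difference of the two sides of the
recurrence is a sum over `C(m, i)` that telescopes, with antiderivative `2 cᵢ C(m, i)`.
-/

open Finset

namespace CentralBinomSum

noncomputable def coeff (j : ℕ) : ℚ := (-3) ^ j / ((j + 1) * (j + 1).centralBinom)

noncomputable def transform (m : ℕ) : ℚ := ∑ j ∈ range (m + 1), coeff j * m.choose j

lemma coeff_succ (i : ℕ) : coeff (i + 1) = -3 * (i + 1) / (2 * (2 * i + 3)) * coeff i := by
  have hrec : ((i + 2 : ℕ) : ℚ) * (i + 2).centralBinom =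
      2 * (2 * (i + 1 : ℕ) + 1) * (i + 1).centralBinom := by
    exact_mod_cast Nat.succ_mul_centralBinom_succ (i + 1)
  have hcentralBinom :
      ((i + 2).centralBinom : ℚ) = 2 * (2 * i + 3) * (i + 1).centralBinom / (i + 2) := by
    rw [eq_div_iff (by positivity)]
    push_cast at hrec
    linear_combination hrec
  rw [coeff, coeff, hcentralBinom]
  push_cast
  field_simp
  ring

lemma sum_mul_choose_succ {R : Type*} [Semiring R] (f : ℕ → R) (m : ℕ) :
    ∑ j ∈ range (m + 2), f j * (m + 1).choose j =
      ∑ i ∈ range (m + 1), (f i + f (i + 1)) * m.choose i := by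
  have hshift := sum_range_succ' (fun j => f j * (m.choose j : R)) (m + 1)
  simp only [sum_range_succ _ (m + 1), Nat.choose_succ_self, Nat.cast_zero, mul_zero, add_zero,
    Nat.choose_zero_right, Nat.cast_one, mul_one] at hshift
  simp only [sum_range_succ' _ (m + 1), Nat.choose_succ_succ', Nat.cast_add, mul_add, add_mul,
    sum_add_distrib, Nat.choose_zero_right, Nat.cast_one, mul_one, hshift]
  abel

lemma coeff_mul_choose_telescope {m i : ℕ} (hi : i ≤ m) :
    ((3 * m + 5) * coeff i + 2 * (2 * m + 3) * coeff (i + 1)) * m.choose i =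
      2 * coeff i * m.choose i - 2 * coeff (i + 1) * m.choose (i + 1) := by
  have hchoose : (m.choose (i + 1) : ℚ) = m.choose i * (m - i) / (i + 1) := by
    have h := congrArg (Nat.cast : ℕ → ℚ) (Nat.choose_succ_right_eq m i)
    push_cast [Nat.cast_sub hi] at h
    rw [eq_div_iff (by positivity), h]
  rw [coeff_succ, hchoose]
  field_simp
  ring

lemma transform_succ (m : ℕ) :
    2 * (2 * m + 3) * transform (m + 1) = (m + 1) * transform m + 1 := by
  have htelescope : ∑ i ∈ range (m + 1),
      ((3 * m + 5) * coeff i + 2 * (2 * m + 3) * coeff (i + 1)) * m.choose i = 1 := by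
    rw [sum_congr rfl fun i hi => coeff_mul_choose_telescope (Nat.lt_succ_iff.mp (mem_range.mp hi)),
      sum_range_sub' (fun i => 2 * coeff i * m.choose i), Nat.choose_succ_self]
    simp [coeff, Nat.centralBinom]
  rw [transform, transform, show m + 1 + 1 = m + 2 from rfl, sum_mul_choose_succ, mul_sum, mul_sum,
    ← sub_eq_iff_eq_add', ← sum_sub_distrib]
  convert htelescope using 2 with i
  ring

lemma sum_range_succ_centralBinom (m : ℕ) :
    ∑ k ∈ range (m + 1), (k.centralBinom : ℚ) =
      (m + 1) * (m + 1).centralBinom * transform m := by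
  induction m with
  | zero => simp [transform, coeff, Nat.centralBinom]
  | succ m ih =>
    have hrec : ((m + 2 : ℕ) : ℚ) * (m + 2).centralBinom =
        2 * (2 * (m + 1 : ℕ) + 1) * (m + 1).centralBinom := by
      exact_mod_cast Nat.succ_mul_centralBinom_succ (m + 1)
    push_cast at hrec ⊢
    calc ∑ k ∈ range (m + 1 + 1), (k.centralBinom : ℚ)
        = (m + 1).centralBinom * ((m + 1) * transform m + 1) := by rw [sum_range_succ, ih]; ring
      _ = (m + 1).centralBinom * (2 * (2 * m + 3) * transform (m + 1)) := by rw [transform_succ]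
      _ = (m + 1 + 1) * (m + 1 + 1).centralBinom * transform (m + 1) := by
        linear_combination (transform (m + 1)) * hrec.symm

end CentralBinomSum

theorem stmt_2_general (n : ℕ) :
    (∑ k ∈ Finset.range n, ((2 * k).choose k : ℚ)) =
      (n : ℚ) * ((2 * n).choose n : ℚ) *
        ∑ k ∈ Finset.Icc 1 n,
          ((-3 : ℚ) ^ (k - 1) / (k : ℚ)) * (((2 * k).choose k : ℚ))⁻¹ *
            ((n - 1).choose (k - 1) : ℚ) := by
  rcases n with _ | m
  · simp
  have hcoeffs : ∑ k ∈ Finset.Icc 1 (m + 1), ((-3 : ℚ) ^ (k - 1) / (k : ℚ)) *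
      (((2 * k).choose k : ℚ))⁻¹ * ((m + 1 - 1).choose (k - 1) : ℚ) =
        CentralBinomSum.transform m := by
    rw [← Ico_add_one_right_eq_Icc, sum_Ico_eq_sum_range, CentralBinomSum.transform]
    refine sum_congr (by simp) fun j _ => ?_
    rw [add_tsub_cancel_right, add_tsub_cancel_left, add_comm 1 j,
      ← Nat.centralBinom_eq_two_mul_choose, CentralBinomSum.coeff, div_eq_mul_inv, div_eq_mul_inv,
      mul_inv, Nat.cast_add, Nat.cast_one]
    ring
  rw [hcoeffs]
  simp only [← Nat.centralBinom_eq_two_mul_choose]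
  exact_mod_cast CentralBinomSum.sum_range_succ_centralBinom m

theorem stmt_2 (n : ℕ) (hn : 0 < n) :
    (∑ k ∈ Finset.range n, ((2 * k).choose k : ℚ)) =
      (n : ℚ) * ((2 * n).choose n : ℚ) *
        ∑ k ∈ Finset.Icc 1 n,
          ((-3 : ℚ) ^ (k - 1) / (k : ℚ)) * (((2 * k).choose k : ℚ))⁻¹ *
            ((n - 1).choose (k - 1) : ℚ) :=
  stmt_2_general n
end

section
/- For every positive integer n and integer k with 1 ≤ k ≤ n, the identity C(n-1/2, n-k) = (2^{2k-1}/k)·C(n-1,k-1)·C(2k,k)^{-1}·C(n-1/2,n-1) holds. -/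
/-!
With `x = n - 1/2`, the recurrence `C(x, i + 1) (i + 1) = C(x, i) (x - i)` and
`(k + 1) C(2k + 2, k + 1) = 2 (2k + 1) C(2k, k)` give, by induction on `k`,
`C(x, n - k) C(2k, k) = 4^k C(n, k) C(x, n)`. The theorem is this identity after one more step of
the recurrence, `C(x, n) n = C(x, n - 1) / 2`, and `k C(n, k) = n C(n - 1, k - 1)`.
-/

namespace Ring

attribute [local instance] BinomialRing.toIsAddTorsionFree in
theorem choose_succ_mul_succ {R : Type*} [Ring R] [BinomialRing R] (r : R) (k : ℕ) :
    choose r (k + 1) * (k + 1) = choose r k * (r - k) := by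
  apply (nsmul_right_inj (Nat.factorial_ne_zero k)).mp
  calc k.factorial • (choose r (k + 1) * (k + 1))
      = (k + 1).factorial • choose r (k + 1) := by
        rw [Nat.factorial_succ, mul_comm, mul_nsmul, smul_comm, nsmul_eq_mul (k + 1),
          Nat.cast_comm, Nat.cast_succ]
    _ = (descPochhammer ℤ k).smeval r * (r - k) := by
        rw [← descPochhammer_eq_factorial_smul_choose, descPochhammer_succ_right,
          Polynomial.smeval_mul, Polynomial.smeval_sub, Polynomial.smeval_X,
          Polynomial.smeval_natCast]
        simp only [pow_one, pow_zero, nsmul_eq_mul, mul_one]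
    _ = k.factorial • (choose r k * (r - k)) := by
        rw [descPochhammer_eq_factorial_smul_choose, smul_mul_assoc]

end Ring

open Nat in
theorem choose_add_sub_half_mul_centralBinom {K : Type*} [Field K] [CharZero K] [BinomialRing K]
    (m j : ℕ) :
    Ring.choose ((m + j : ℕ) - 1 / 2 : K) m * centralBinom j =
      4 ^ j * (m + j).choose j * Ring.choose ((m + j : ℕ) - 1 / 2 : K) (m + j) := by
  induction j generalizing m with
  | zero => simp
  | succ j ih =>
    set x : K := ((m + (j + 1) : ℕ) : K) - 1 / 2 with hx
    have hstep : Ring.choose x (m + 1) * (m + 1) = Ring.choose x m * (j + 1 / 2) := by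
      rw [Ring.choose_succ_mul_succ, hx]
      push_cast
      ring
    have hcentral : ((j : K) + 1) * centralBinom (j + 1) = 2 * (2 * j + 1) * centralBinom j := by
      exact_mod_cast succ_mul_centralBinom_succ j
    have hchoose : ((m + (j + 1)).choose (j + 1) : K) * (j + 1) =
        (m + (j + 1)).choose j * (m + 1) := by
      have := choose_succ_right_eq (m + (j + 1)) j
      rw [show m + (j + 1) - j = m + 1 by omega] at this
      exact_mod_cast this
    have ih' := ih (m + 1)
    rw [show m + 1 + j = m + (j + 1) by ring] at ih'
    apply mul_left_cancel₀ (Nat.cast_add_one_ne_zero j : (j : K) + 1 ≠ 0)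
    rw [pow_succ]
    linear_combination Ring.choose x m * hcentral - 4 * (centralBinom j : K) * hstep +
      4 * ((m : K) + 1) * ih' - 4 * 4 ^ j * Ring.choose x (m + (j + 1)) * hchoose

theorem stmt_4 (n k : ℕ) (hk : 1 ≤ k) (hkn : k ≤ n) :
    Ring.choose ((n : ℚ) - 1/2) (n - k) =
      (2 : ℚ) ^ (2 * k - 1) / (k : ℚ) * ((n - 1).choose (k - 1) : ℚ) *
        (((2 * k).choose k : ℚ))⁻¹ * Ring.choose ((n : ℚ) - 1/2) (n - 1) := by
  obtain ⟨k, rfl⟩ : ∃ k', k = k' + 1 := ⟨k - 1, by omega⟩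
  obtain ⟨m, rfl⟩ : ∃ m, n = m + k + 1 := ⟨n - (k + 1), by omega⟩
  rw [← Nat.centralBinom_eq_two_mul_choose, show m + k + 1 - (k + 1) = m by omega,
    Nat.add_sub_cancel, Nat.add_sub_cancel, show 2 * (k + 1) - 1 = 2 * k + 1 by omega]
  set x : ℚ := ((m + k + 1 : ℕ) : ℚ) - 1 / 2 with hx
  have hcentral : Ring.choose x m * (k + 1).centralBinom =
      2 ^ (2 * (k + 1)) * (m + k + 1).choose (k + 1) * Ring.choose x (m + k + 1) := by
    rw [pow_mul]
    exact_mod_cast choose_add_sub_half_mul_centralBinom (K := ℚ) m (k + 1)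
  have hlast : Ring.choose x (m + k + 1) * ((m + k : ℕ) + 1) = Ring.choose x (m + k) / 2 := by
    rw [Ring.choose_succ_mul_succ, hx]
    push_cast
    ring
  have hchoose :
      ((m + k : ℕ) + 1 : ℚ) * (m + k).choose k = (m + k + 1).choose (k + 1) * (k + 1) := by
    exact_mod_cast Nat.add_one_mul_choose_eq (m + k) k
  have hcb : ((k + 1).centralBinom : ℚ) ≠ 0 := by exact_mod_cast (Nat.centralBinom_pos _).ne'
  clear_value x
  field_simp
  push_cast at hlast hchoose ⊢
  linear_combination ((k : ℚ) + 1) * hcentral -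
    2 ^ (2 * (k + 1)) * Ring.choose x (m + k + 1) * hchoose +
    2 ^ (2 * (k + 1)) * ((m + k).choose k : ℚ) * hlast
end

section
/- Let p be a prime and let p^e ≤ p^f = q be powers of p with e ≤ f. Then for every integer k with 0 < k < p^e, the binomial coefficient C(q,k) satisfies C(q,k) ≡ (-1)^{k-1}·q/k (mod p^{2f-2e+2}), i.e. k·C(q,k) ≡ (-1)^{k-1}·q (mod k·p^{2f-2e+2}) after clearing denominators appropriately. -/
/-!
Write `q = p ^ f` and `δ = p ^ (-(f - e + 1))`. For `0 < j < p ^ e` we have `‖q / j‖ ≤ δ ≤ 1`, and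
`C(q - 1, n + 1) = -C(q - 1, n) (1 - q / (n + 1))`, so by induction `‖C(q - 1, m) - (-1) ^ m‖ ≤ δ`
for `m < p ^ e`. Since `C(q, k) = (q / k) C(q - 1, k - 1)`, the difference
`C(q, k) - (-1) ^ (k - 1) q / k = (q / k) (C(q - 1, k - 1) - (-1) ^ (k - 1))` has norm at most `δ ^ 2`.
-/

theorem Nat.cast_choose_succ_eq_div_mul {K : Type*} [Field K] [CharZero K] (N j : ℕ) :
    (N.choose (j + 1) : K) = N / (j + 1) * (N - 1).choose j := by
  rcases N with _ | N
  · simp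
  · have h := Nat.add_one_mul_choose_eq N j
    rw [Nat.add_sub_cancel, div_mul_eq_mul_div, eq_div_iff (Nat.cast_add_one_ne_zero j)]
    exact_mod_cast h.symm

theorem Nat.cast_choose_pred_succ {K : Type*} [Field K] [CharZero K] {N n : ℕ} (hn : n < N) :
    ((N - 1).choose (n + 1) : K) = -((N - 1).choose n * (1 - N / (n + 1))) := by
  have h : ((N - 1).choose (n + 1) : K) * (n + 1) = (N - 1).choose n * (N - 1 - n) := by
    rw [← Nat.cast_pred (by omega), ← Nat.cast_sub (by omega)]
    exact_mod_cast Nat.choose_succ_right_eq (N - 1) n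
  field_simp
  linear_combination h

namespace Padic

variable {p : ℕ} [Fact p.Prime]

theorem zpow_one_sub_le_norm_natCast {m e : ℕ} (hm : 0 < m) (hme : m < p ^ e) :
    (p : ℝ) ^ (1 - e : ℤ) ≤ ‖(m : ℚ_[p])‖ := by
  have hndvd : ¬ (p ^ e : ℤ) ∣ m := by exact_mod_cast Nat.not_dvd_of_pos_of_lt hm hme
  rw [← not_lt, show (1 - e : ℤ) = -e + 1 by ring, ← norm_le_pow_iff_norm_lt_pow_add_one]
  exact_mod_cast (norm_int_le_pow_iff_dvd m e).not.mpr hndvd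

theorem norm_p_pow_div_natCast_le {m e : ℕ} (f : ℕ) (hm : 0 < m) (hme : m < p ^ e) :
    ‖(p : ℚ_[p]) ^ f / m‖ ≤ (p : ℝ) ^ (-((f : ℤ) - e + 1)) := by
  have hp : (0 : ℝ) < p := by exact_mod_cast (Fact.out : p.Prime).pos
  calc ‖(p : ℚ_[p]) ^ f / m‖ = (p : ℝ) ^ (-f : ℤ) / ‖(m : ℚ_[p])‖ := by rw [norm_div, norm_p_pow]
    _ ≤ (p : ℝ) ^ (-f : ℤ) / (p : ℝ) ^ (1 - e : ℤ) := by
      gcongr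
      exact zpow_one_sub_le_norm_natCast hm hme
    _ = (p : ℝ) ^ (-((f : ℤ) - e + 1)) := by rw [← zpow_sub₀ hp.ne']; ring_nf

theorem norm_choose_p_pow_sub_one_sub_neg_one_pow_le {e f m : ℕ} (hef : e ≤ f) (hm : m < p ^ e) :
    ‖((p ^ f - 1).choose m : ℚ_[p]) - (-1) ^ m‖ ≤ (p : ℝ) ^ (-((f : ℤ) - e + 1)) := by
  set δ : ℝ := (p : ℝ) ^ (-((f : ℤ) - e + 1))
  have hδ : δ ≤ 1 :=
    zpow_le_one_of_nonpos₀ (by exact_mod_cast (Fact.out : p.Prime).one_le) (by omega)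
  induction m with
  | zero =>
    rw [Nat.choose_zero_right, Nat.cast_one, pow_zero, sub_self, norm_zero]
    positivity
  | succ n ih =>
    have hq : n < p ^ f := by
      have := Nat.pow_le_pow_right (Fact.out : p.Prime).pos hef
      omega
    set x : ℚ_[p] := (p : ℚ_[p]) ^ f / (n + 1)
    have hx : ‖x‖ ≤ δ := by
      simpa only [Nat.cast_succ] using norm_p_pow_div_natCast_le f n.succ_pos hm
    have h1x : ‖1 - x‖ ≤ 1 := by
      rw [sub_eq_add_neg]
      exact (nonarchimedean _ _).trans (max_le norm_one.le ((norm_neg x).trans_le (hx.trans hδ)))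
    have hrec : ((p ^ f - 1).choose (n + 1) : ℚ_[p]) - (-1) ^ (n + 1) =
        -((((p ^ f - 1).choose n : ℚ_[p]) - (-1) ^ n) * (1 - x)) + (-1) ^ n * x := by
      rw [Nat.cast_choose_pred_succ (K := ℚ_[p]) (by exact_mod_cast hq)]
      push_cast
      ring
    rw [hrec]
    refine (nonarchimedean _ _).trans (max_le ?_ ?_)
    · rw [norm_neg, norm_mul]
      exact (mul_le_of_le_one_right (norm_nonneg _) h1x).trans (ih (by omega))
    · simpa using hx

end Padic

theorem stmt_8_general (p : ℕ) [Fact p.Prime] (e f : ℕ) (hef : e ≤ f)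
    (k : ℕ) (hk : 0 < k) (hk' : k < p ^ e) :
    ‖(((p ^ f).choose k : ℚ_[p]) - (-1) ^ (k - 1) * (p : ℚ_[p]) ^ f / (k : ℚ_[p]))‖ ≤
      (p : ℝ) ^ (-(2 * (f : ℤ) - 2 * e + 2)) := by
  obtain ⟨j, rfl⟩ := Nat.exists_eq_add_one_of_ne_zero hk.ne'
  have hfactor : ((p ^ f).choose (j + 1) : ℚ_[p]) - (-1) ^ j * (p : ℚ_[p]) ^ f / (j + 1) =
      (p : ℚ_[p]) ^ f / (j + 1) * (((p ^ f - 1).choose j : ℚ_[p]) - (-1) ^ j) := by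
    rw [Nat.cast_choose_succ_eq_div_mul]
    push_cast
    ring
  rw [Nat.add_sub_cancel]
  push_cast
  rw [hfactor, norm_mul]
  have hp : (0 : ℝ) < p := by exact_mod_cast (Fact.out : p.Prime).pos
  calc _ ≤ (p : ℝ) ^ (-((f : ℤ) - e + 1)) * (p : ℝ) ^ (-((f : ℤ) - e + 1)) := by
        gcongr
        · exact_mod_cast Padic.norm_p_pow_div_natCast_le f hk hk'
        · exact Padic.norm_choose_p_pow_sub_one_sub_neg_one_pow_le hef (by omega)
    _ = (p : ℝ) ^ (-(2 * (f : ℤ) - 2 * e + 2)) := by rw [← zpow_add₀ hp.ne']; ring_nf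

theorem stmt_8 (p : ℕ) [Fact p.Prime] (e f : ℕ) (he : 0 < e) (hef : e ≤ f)
    (k : ℕ) (hk : 0 < k) (hk' : k < p ^ e) :
    ‖(((p ^ f).choose k : ℚ_[p]) - (-1) ^ (k - 1) * (p : ℚ_[p]) ^ f / (k : ℚ_[p]))‖ ≤
      (p : ℝ) ^ (-(2 * (f : ℤ) - 2 * e + 2)) :=
  stmt_8_general p e f hef k hk hk'
end

section
/- Let p be an odd prime and let p^e < p^f = q be powers of p with e < f. Then for every integer k with 0 < k < p^e + p^{e-1}, we have C(q,k) ≡ (-1)^{k-1}·q/k (mod p^{2f-2e+2}) in the p-adic integers. -/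
/-!
Write `q = p ^ f`. For `k ≥ 1`, `C(q, k) = (-1)^(k-1) (q/k) ∏_{0<i<k} (1 - q/i)`, so the claim says
that `∏ (1 - q/i) - 1` has valuation at least `f - 2e + 2 + v_p(k)`. Expanding the product, the
terms of degree at least two are bounded by products `q²/(ij)` with `i ≠ j`; at most one index below
`p^e + p^(e-1)` is divisible by `p^e`, which gives the bound. The linear term is `-q H_(k-1)`. When
`k ≠ p^e` its summands are bounded one at a time. When `k = p^e`, pairing `i` with `p^e - i` gives
`2 H_(p^e-1) = ∑ p^e / (i (p^e - i))`, and `2` is a unit because `p` is odd.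
-/

open Finset

theorem norm_prod_one_add_sub_one_sub_sum_le {ι R : Type*} [NormedCommRing R] [IsUltrametricDist R]
    {s : Finset ι} {x : ι → R} {r : ℝ} (hr : 0 ≤ r) (hx : ∀ i ∈ s, ‖x i‖ ≤ 1)
    (hxx : ∀ i ∈ s, ∀ j ∈ s, i ≠ j → ‖x i * x j‖ ≤ r) :
    ‖∏ i ∈ s, (1 + x i) - 1 - ∑ i ∈ s, x i‖ ≤ r := by
  classical
  induction s using Finset.induction_on with
  | empty => simpa using hr
  | insert a s ha ih =>
    set P := ∏ i ∈ s, (1 + x i)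
    set S := ∑ i ∈ s, x i
    have ih' : ‖P - 1 - S‖ ≤ r := ih (fun i hi => hx i (mem_insert_of_mem hi))
      (fun i hi j hj => hxx i (mem_insert_of_mem hi) j (mem_insert_of_mem hj))
    have hmul : ‖x a * (P - 1 - S)‖ ≤ r := (norm_mul_le _ _).trans <|
      (mul_le_of_le_one_left (norm_nonneg _) (hx a (mem_insert_self a s))).trans ih'
    have hcross : ‖∑ i ∈ s, x a * x i‖ ≤ r :=
      IsUltrametricDist.norm_sum_le_of_forall_le_of_nonneg hr fun i hi =>
        hxx a (mem_insert_self a s) i (mem_insert_of_mem hi) (ne_of_mem_of_not_mem hi ha).symm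
    rw [prod_insert ha, sum_insert ha, show (1 + x a) * P - 1 - (x a + S) =
        (P - 1 - S) + x a * (P - 1 - S) + ∑ i ∈ s, x a * x i by rw [← mul_sum]; ring]
    exact (IsUltrametricDist.norm_add_le_max _ _).trans <| max_le
      ((IsUltrametricDist.norm_add_le_max _ _).trans (max_le ih' hmul)) hcross

theorem Nat.cast_choose_succ_eq_neg_one_pow_mul_prod {K : Type*} [Field K] [CharZero K]
    (n k : ℕ) :
    (n.choose (k + 1) : K) = (-1) ^ k * (n / (k + 1)) * ∏ i ∈ Icc 1 k, (1 - (n : K) / i) := by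
  induction k with
  | zero => simp
  | succ k ih =>
    have hrec : (n.choose (k + 1 + 1) : K) * (k + 1 + 1) = n.choose (k + 1) * (n - (k + 1)) := by
      rcases le_or_gt (k + 1) n with h | h
      · have := congrArg (Nat.cast (R := K)) (choose_succ_right_eq n (k + 1))
        push_cast [Nat.cast_sub h] at this
        exact this
      · simp [choose_eq_zero_of_lt h, choose_eq_zero_of_lt (show n < k + 1 + 1 by omega)]
    rw [eq_div_of_mul_eq (by exact_mod_cast (k + 1).succ_ne_zero) hrec, ih,
      prod_Icc_succ_top (by omega)]
    field_simp
    push_cast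
    ring

section PadicValNat

variable {p : ℕ} [Fact p.Prime]

theorem padicValNat_lt_of_mul_lt_of_lt_mul_succ {e m j : ℕ} (h₁ : p ^ e * m < j)
    (h₂ : j < p ^ e * (m + 1)) : padicValNat p j < e := by
  by_contra! h
  exact Nat.not_dvd_of_lt_of_lt_mul_succ h₁ h₂ ((padicValNat_dvd_iff_le (pos_of_gt h₁).ne').2 h)

theorem padicValNat_lt_of_lt_pow {e j : ℕ} (hj0 : 0 < j) (hj : j < p ^ e) :
    padicValNat p j < e :=
  padicValNat_lt_of_mul_lt_of_lt_mul_succ (m := 0) (by simpa using hj0) (by simpa using hj)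

variable {e j : ℕ}

theorem padicValNat_le_of_lt_pow_add_pow_of_ne (hj : j < p ^ (e + 1) + p ^ e) (hj0 : 0 < j)
    (hne : j ≠ p ^ (e + 1)) : padicValNat p j ≤ e := by
  rcases lt_or_gt_of_ne hne with hlt | hgt
  · exact Nat.le_of_lt_succ (padicValNat_lt_of_lt_pow hj0 hlt)
  · have : p ^ e ≤ p ^ (e + 1) := Nat.pow_le_pow_right (Fact.out : p.Prime).pos (by omega)
    exact Nat.le_of_lt_succ (padicValNat_lt_of_mul_lt_of_lt_mul_succ (m := 1) (by rwa [mul_one])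
      (show j < p ^ (e + 1) * (1 + 1) by omega))

theorem padicValNat_le_succ_of_lt_pow_add_pow (hj : j < p ^ (e + 1) + p ^ e) (hj0 : 0 < j) :
    padicValNat p j ≤ e + 1 := by
  by_cases hne : j = p ^ (e + 1)
  · simp [hne]
  · exact (padicValNat_le_of_lt_pow_add_pow_of_ne hj hj0 hne).trans (Nat.le_succ e)

theorem padicValNat_lt_of_pow_lt_of_lt_pow_add_pow (hj : j < p ^ (e + 1) + p ^ e)
    (hgt : p ^ (e + 1) < j) : padicValNat p j < e :=
  padicValNat_lt_of_mul_lt_of_lt_mul_succ (m := p) (by rwa [← pow_succ])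
    (by rwa [mul_add_one, ← pow_succ])

end PadicValNat

namespace Padic

variable {p : ℕ} [Fact p.Prime]

theorem norm_natCast_eq_zpow {j : ℕ} (hj : j ≠ 0) :
    ‖(j : ℚ_[p])‖ = (p : ℝ) ^ (-(padicValNat p j : ℤ)) := by
  rw [norm_eq_zpow_neg_valuation (Nat.cast_ne_zero.2 hj), valuation_natCast]

theorem norm_pow_div_natCast {j : ℕ} (hj : j ≠ 0) (f : ℕ) :
    ‖(p : ℚ_[p]) ^ f / j‖ = (p : ℝ) ^ ((padicValNat p j : ℤ) - f) := by
  rw [norm_div, norm_p_pow, norm_natCast_eq_zpow hj,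
    ← zpow_sub₀ (by simp [(Fact.out : p.Prime).ne_zero])]
  ring_nf

theorem norm_harmonic_pow_sub_one_le (hodd : Odd p) (n : ℕ) :
    ‖(harmonic (p ^ n - 1) : ℚ_[p])‖ ≤ (p : ℝ) ^ ((n : ℤ) - 2) := by
  set N := p ^ n with hN
  have hN0 : 0 < N := pow_pos (Fact.out : p.Prime).pos n
  have hp : (0 : ℝ) < p := by exact_mod_cast (Fact.out : p.Prime).pos
  have hH : (harmonic (N - 1) : ℚ_[p]) = ∑ i ∈ Icc 1 (N - 1), (i : ℚ_[p])⁻¹ := by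
    simp only [harmonic_eq_sum_Icc, Rat.cast_sum, Rat.cast_inv, Rat.cast_natCast]
  have hreflect : ∑ i ∈ Icc 1 (N - 1), (i : ℚ_[p])⁻¹ =
      ∑ i ∈ Icc 1 (N - 1), ((N - i : ℕ) : ℚ_[p])⁻¹ :=
    sum_nbij' (N - ·) (N - ·) (by simp; omega) (by simp; omega) (by simp; omega) (by simp; omega)
      (fun i hi => by rw [Nat.sub_sub_self (by simp at hi; omega)])
  have hpair : 2 * (harmonic (N - 1) : ℚ_[p]) =
      ∑ i ∈ Icc 1 (N - 1), (N : ℚ_[p]) / (i * (N - i : ℕ)) := by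
    rw [two_mul, hH]
    nth_rw 2 [hreflect]
    rw [← sum_add_distrib]
    refine sum_congr rfl fun i hi => ?_
    rw [mem_Icc] at hi
    have hi0 : (i : ℚ_[p]) ≠ 0 := by exact_mod_cast (show i ≠ 0 by omega)
    have hNi : ((N - i : ℕ) : ℚ_[p]) ≠ 0 := by exact_mod_cast (show N - i ≠ 0 by omega)
    rw [inv_add_inv hi0 hNi, Nat.cast_sub (by omega)]
    ring
  have h2 : ‖(2 : ℚ_[p])‖ = 1 := by
    simpa using (norm_natCast_eq_one_iff (p := p)).2 (Nat.coprime_two_right.2 hodd)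
  rw [← one_mul ‖_‖, ← h2, ← norm_mul, hpair]
  refine IsUltrametricDist.norm_sum_le_of_forall_le_of_nonneg (by positivity) fun i hi => ?_
  rw [mem_Icc] at hi
  have hvi : padicValNat p i < n := padicValNat_lt_of_lt_pow (by omega) (by omega)
  have hvNi : padicValNat p (N - i) < n := padicValNat_lt_of_lt_pow (by omega) (by omega)
  rw [norm_div, norm_mul, norm_natCast_eq_zpow hN0.ne', norm_natCast_eq_zpow (by omega),
    norm_natCast_eq_zpow (by omega), hN, padicValNat.prime_pow, ← hN, ← zpow_add₀ hp.ne',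
    ← zpow_sub₀ hp.ne']
  exact zpow_le_zpow_right₀ (by exact_mod_cast (Fact.out : p.Prime).one_le) (by omega)

variable {e : ℕ}

theorem norm_harmonic_le (hodd : Odd p) {K : ℕ} (hK : K + 1 < p ^ (e + 1) + p ^ e) :
    ‖(harmonic K : ℚ_[p])‖ ≤ (p : ℝ) ^ (2 * (e : ℤ) - padicValNat p (K + 1)) := by
  have hp1 : (1 : ℝ) ≤ p := by exact_mod_cast (Fact.out : p.Prime).one_le
  by_cases hKp : K + 1 = p ^ (e + 1)
  · rw [hKp, padicValNat.prime_pow, show K = p ^ (e + 1) - 1 by omega]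
    convert norm_harmonic_pow_sub_one_le hodd (e + 1) using 2
    push_cast
    ring
  have hvK : padicValNat p (K + 1) ≤ e :=
    padicValNat_le_of_lt_pow_add_pow_of_ne hK K.succ_pos hKp
  simp only [harmonic_eq_sum_Icc, Rat.cast_sum, Rat.cast_inv, Rat.cast_natCast]
  refine IsUltrametricDist.norm_sum_le_of_forall_le_of_nonneg (by positivity) fun i hi => ?_
  rw [mem_Icc] at hi
  rw [norm_inv, norm_natCast_eq_zpow (by omega), ← zpow_neg, neg_neg]
  refine zpow_le_zpow_right₀ hp1 ?_
  by_cases hip : i = p ^ (e + 1)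
  · have := padicValNat_lt_of_pow_lt_of_lt_pow_add_pow hK (by omega)
    rw [hip, padicValNat.prime_pow]
    omega
  · have := padicValNat_le_of_lt_pow_add_pow_of_ne (show i < p ^ (e + 1) + p ^ e by omega)
      (by omega) hip
    omega

theorem norm_prod_one_sub_pow_div_sub_one_le (hodd : Odd p) {f K : ℕ} (hef : e + 1 < f)
    (hK : K + 1 < p ^ (e + 1) + p ^ e) :
    ‖∏ i ∈ Icc 1 K, (1 - (p : ℚ_[p]) ^ f / i) - 1‖ ≤
      (p : ℝ) ^ (2 * (e : ℤ) - f - padicValNat p (K + 1)) := by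
  have hp1 : (1 : ℝ) ≤ p := by exact_mod_cast (Fact.out : p.Prime).one_le
  have hp0 : (p : ℝ) ≠ 0 := by positivity
  set x : ℕ → ℚ_[p] := fun i => -((p : ℚ_[p]) ^ f / i)
  have hnorm_x : ∀ i ∈ Icc 1 K, ‖x i‖ = (p : ℝ) ^ ((padicValNat p i : ℤ) - f) := fun i hi => by
    rw [norm_neg, norm_pow_div_natCast (by simp at hi; omega)]
  have hv : ∀ i ∈ Icc 1 K, i < p ^ (e + 1) + p ^ e ∧ padicValNat p i ≤ e + 1 := fun i hi => by
    rw [mem_Icc] at hi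
    exact ⟨by omega, padicValNat_le_succ_of_lt_pow_add_pow (by omega) (by omega)⟩
  have hvK := padicValNat_le_succ_of_lt_pow_add_pow hK K.succ_pos
  have hquad : ‖∏ i ∈ Icc 1 K, (1 + x i) - 1 - ∑ i ∈ Icc 1 K, x i‖ ≤
      (p : ℝ) ^ (2 * (e : ℤ) - f - padicValNat p (K + 1)) := by
    refine norm_prod_one_add_sub_one_sub_sum_le (by positivity) (fun i hi => ?_)
      (fun i hi j hj hij => ?_)
    · rw [hnorm_x i hi]
      exact zpow_le_one_of_nonpos₀ hp1 (by have := (hv i hi).2; omega)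
    · have hij : padicValNat p i + padicValNat p j ≤ 2 * e + 1 := by
        by_cases hip : i = p ^ (e + 1)
        · have := padicValNat_le_of_lt_pow_add_pow_of_ne (hv j hj).1 (by simp at hj; omega)
            (hip ▸ hij.symm)
          have := (hv i hi).2
          omega
        · have := padicValNat_le_of_lt_pow_add_pow_of_ne (hv i hi).1 (by simp at hi; omega) hip
          have := (hv j hj).2
          omega
      rw [norm_mul, hnorm_x i hi, hnorm_x j hj, ← zpow_add₀ hp0]
      exact zpow_le_zpow_right₀ hp1 (by omega)
  have hlin : ‖∑ i ∈ Icc 1 K, x i‖ ≤ (p : ℝ) ^ (2 * (e : ℤ) - f - padicValNat p (K + 1)) := by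
    have hsum : ∑ i ∈ Icc 1 K, x i = -(p : ℚ_[p]) ^ f * harmonic K := by
      simp only [x, harmonic_eq_sum_Icc, Rat.cast_sum, Rat.cast_inv, Rat.cast_natCast, neg_mul,
        mul_sum, sum_neg_distrib, div_eq_mul_inv]
    rw [hsum, norm_mul, norm_neg, norm_p_pow, show 2 * (e : ℤ) - f - padicValNat p (K + 1) =
      -f + (2 * e - padicValNat p (K + 1)) by ring, zpow_add₀ hp0]
    exact mul_le_mul_of_nonneg_left (norm_harmonic_le hodd hK) (by positivity)
  calc ‖∏ i ∈ Icc 1 K, (1 - (p : ℚ_[p]) ^ f / i) - 1‖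
      = ‖(∏ i ∈ Icc 1 K, (1 + x i) - 1 - ∑ i ∈ Icc 1 K, x i) + ∑ i ∈ Icc 1 K, x i‖ := by
        simp only [x, sub_add_cancel, ← sub_eq_add_neg]
    _ ≤ _ := (IsUltrametricDist.norm_add_le_max _ _).trans (max_le hquad hlin)

end Padic

theorem stmt_9 (p : ℕ) [Fact p.Prime] (hodd : Odd p) (e f : ℕ) (he : 0 < e) (hef : e < f)
    (k : ℕ) (hk : 0 < k) (hk' : k < p ^ e + p ^ (e - 1)) :
    ‖(((p ^ f).choose k : ℚ_[p]) - (-1) ^ (k - 1) * (p : ℚ_[p]) ^ f / (k : ℚ_[p]))‖ ≤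
      (p : ℝ) ^ (-(2 * (f : ℤ) - 2 * e + 2)) := by
  obtain ⟨e, rfl⟩ := Nat.exists_eq_add_one_of_ne_zero he.ne'
  obtain ⟨K, rfl⟩ := Nat.exists_eq_add_one_of_ne_zero hk.ne'
  rw [Nat.add_sub_cancel] at hk' ⊢
  have hp0 : (p : ℝ) ≠ 0 := by exact_mod_cast (Fact.out : p.Prime).ne_zero
  have hdiff : ((p ^ f).choose (K + 1) : ℚ_[p]) - (-1) ^ K * (p : ℚ_[p]) ^ f / (K + 1 : ℕ) =
      (-1) ^ K * ((p : ℚ_[p]) ^ f / (K + 1 : ℕ)) *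
        (∏ i ∈ Icc 1 K, (1 - (p : ℚ_[p]) ^ f / i) - 1) := by
    rw [Nat.cast_choose_succ_eq_neg_one_pow_mul_prod]
    push_cast
    ring
  rw [hdiff, norm_mul, norm_mul, norm_pow, norm_neg, norm_one, one_pow, one_mul,
    Padic.norm_pow_div_natCast K.succ_ne_zero]
  calc _ ≤ (p : ℝ) ^ ((padicValNat p (K + 1) : ℤ) - f) *
        (p : ℝ) ^ (2 * (e : ℤ) - f - padicValNat p (K + 1)) :=
        mul_le_mul_of_nonneg_left (Padic.norm_prod_one_sub_pow_div_sub_one_le hodd hef hk')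
          (by positivity)
    _ = _ := by
      rw [← zpow_add₀ hp0]
      push_cast
      ring_nf
end

section
/- Let q = 2^f and 2^e ≤ q be powers of 2 with e ≤ f. Then for every integer k with 0 < k < 2^e, we have C(q,k) ≡ (-1)^{k-1}·q/k (mod 2^{2f-2e+3}) in the 2-adic integers. -/
/-!
With `q = 2 ^ f`, `C(q, k) = (-1) ^ (k - 1) (q / k) ∏_{0 < i < k} (1 - q / i)`, so the error is
`‖(q / k) (∏ (1 - q / i) - 1)‖`. In an ultrametric ring this is at most the largest `‖(q / k) (q / i)‖`
as soon as every `‖q / i‖ ≤ 1`. Among the distinct `i, k < 2 ^ e` at most one has 2-adic valuation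
`e - 1`, which gives `‖(q / k) (q / i)‖ ≤ 2 ^ (-(2f - 2e + 3))`.
-/

open Finset

section Binomial

variable {K : Type*} [Field K] [CharZero K]

lemma Nat.cast_choose_succ_mul (n k : ℕ) :
    (n.choose (k + 1) : K) * (k + 1) = n.choose k * (n - k) := by
  rw [Nat.cast_choose_eq_descPochhammer_div, Nat.cast_choose_eq_descPochhammer_div,
    descPochhammer_succ_eval, Nat.factorial_succ]
  push_cast
  field_simp

lemma Nat.cast_choose_eq_mul_prod_one_sub (n : ℕ) {k : ℕ} (hk : 0 < k) :
    (n.choose k : K) = (-1) ^ (k - 1) * (n / k) * ∏ i ∈ Ico 1 k, (1 - (n : K) / i) := by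
  induction k, hk using Nat.le_induction with
  | base => simp
  | succ k hk ih =>
    obtain ⟨j, rfl⟩ : ∃ j, k = j + 1 := ⟨k - 1, by omega⟩
    have hrec := Nat.cast_choose_succ_mul (K := K) n (j + 1)
    rw [ih] at hrec
    rw [prod_Ico_succ_top hk, eq_div_of_mul_eq (Nat.cast_add_one_ne_zero _) hrec]
    push_cast
    field_simp
    ring

end Binomial

lemma norm_mul_prod_one_sub_sub_one_le {R ι : Type*} [NormedCommRing R] [NormOneClass R]
    [IsUltrametricDist R] (s : Finset ι) (x : ι → R) (y : R) {δ : ℝ} (hδ : 0 ≤ δ)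
    (hx : ∀ i ∈ s, ‖x i‖ ≤ 1) (hyx : ∀ i ∈ s, ‖y * x i‖ ≤ δ) :
    ‖y * (∏ i ∈ s, (1 - x i) - 1)‖ ≤ δ := by
  classical
  induction s using Finset.induction_on with
  | empty => simpa using hδ
  | insert a s ha ih =>
    rw [forall_mem_insert] at hx hyx
    have hone_sub : ‖1 - x a‖ ≤ 1 := by
      rw [sub_eq_add_neg]
      exact (IsUltrametricDist.norm_add_le_max _ _).trans (by simp [hx.1])
    have hsplit : y * (∏ i ∈ insert a s, (1 - x i) - 1) =
        y * (∏ i ∈ s, (1 - x i) - 1) * (1 - x a) + -(y * x a) := by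
      rw [prod_insert ha]; ring
    rw [hsplit]
    refine (IsUltrametricDist.norm_add_le_max _ _).trans (max_le ?_ (by rw [norm_neg]; exact hyx.1))
    calc _ ≤ ‖y * (∏ i ∈ s, (1 - x i) - 1)‖ * ‖1 - x a‖ := norm_mul_le _ _
      _ ≤ δ * 1 := mul_le_mul (ih hx.2 hyx.2) hone_sub (norm_nonneg _) hδ
      _ = δ := mul_one δ

lemma padicValNat_lt_of_lt_pow_s10 {p n e : ℕ} (hn : n ≠ 0) (h : n < p ^ e) : padicValNat p n < e :=
  (padicValNat_le_nat_log n).trans_lt (Nat.log_lt_of_lt_pow hn h)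

lemma eq_two_pow_of_lt_of_le_padicValNat {n m : ℕ} (hn : n ≠ 0) (h : n < 2 ^ (m + 1))
    (hv : m ≤ padicValNat 2 n) : n = 2 ^ m := by
  obtain ⟨c, rfl⟩ := (pow_dvd_pow 2 hv).trans pow_padicValNat_dvd
  have hc : c < 2 := by rw [pow_succ] at h; exact Nat.lt_of_mul_lt_mul_left h
  have : c ≠ 0 := by rintro rfl; simp at hn
  obtain rfl : c = 1 := by omega
  rw [mul_one]

lemma padicValNat_two_add_padicValNat_two_le {a b e : ℕ} (ha : a ≠ 0) (hb : b ≠ 0) (hab : a ≠ b)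
    (ha' : a < 2 ^ e) (hb' : b < 2 ^ e) : padicValNat 2 a + padicValNat 2 b + 3 ≤ 2 * e := by
  have hva := padicValNat_lt_of_lt_pow_s10 ha ha'
  have hvb := padicValNat_lt_of_lt_pow_s10 hb hb'
  obtain ⟨m, rfl⟩ : ∃ m, e = m + 1 := ⟨e - 1, by omega⟩
  by_contra! h
  exact hab <| (eq_two_pow_of_lt_of_le_padicValNat ha ha' (by omega)).trans
    (eq_two_pow_of_lt_of_le_padicValNat hb hb' (by omega)).symm

lemma Padic.norm_inv_natCast {p : ℕ} [Fact p.Prime] {n : ℕ} (hn : n ≠ 0) :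
    ‖(n : ℚ_[p])⁻¹‖ = (p : ℝ) ^ (padicValNat p n : ℤ) := by
  rw [norm_inv, Padic.norm_eq_zpow_neg_valuation (Nat.cast_ne_zero.mpr hn),
    Padic.valuation_natCast, zpow_neg, inv_inv]

lemma Padic.norm_two_pow (f : ℕ) : ‖(2 : ℚ_[2]) ^ f‖ = (2 : ℝ) ^ (-(f : ℤ)) := by
  exact_mod_cast Padic.norm_p_pow (p := 2) f

lemma Padic.norm_two_pow_div_natCast (f : ℕ) {n : ℕ} (hn : n ≠ 0) :
    ‖(2 : ℚ_[2]) ^ f / n‖ = (2 : ℝ) ^ ((padicValNat 2 n : ℤ) - f) := by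
  rw [div_eq_mul_inv, norm_mul, Padic.norm_two_pow, Padic.norm_inv_natCast hn,
    Nat.cast_ofNat, ← zpow_add₀ two_ne_zero, neg_add_eq_sub]

theorem stmt_10_general (e f : ℕ) (hef : e ≤ f)
    (k : ℕ) (hk : 0 < k) (hk' : k < 2 ^ e) :
    ‖(((2 ^ f).choose k : ℚ_[2]) - (-1) ^ (k - 1) * (2 : ℚ_[2]) ^ f / (k : ℚ_[2]))‖ ≤
      (2 : ℝ) ^ (-(2 * (f : ℤ) - 2 * e + 3)) := by
  have hchoose : ((2 ^ f).choose k : ℚ_[2]) =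
      (-1) ^ (k - 1) * (2 ^ f / k) * ∏ i ∈ Ico 1 k, (1 - (2 : ℚ_[2]) ^ f / i) := by
    exact_mod_cast Nat.cast_choose_eq_mul_prod_one_sub (K := ℚ_[2]) (2 ^ f) hk
  have hdiff : ((2 ^ f).choose k : ℚ_[2]) - (-1) ^ (k - 1) * (2 : ℚ_[2]) ^ f / k =
      (-1) ^ (k - 1) * (2 ^ f / k * (∏ i ∈ Ico 1 k, (1 - (2 : ℚ_[2]) ^ f / i) - 1)) := by
    rw [hchoose]; ring
  rw [hdiff, norm_mul, norm_pow, norm_neg, norm_one, one_pow, one_mul]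
  refine norm_mul_prod_one_sub_sub_one_le _ _ _ (by positivity) (fun i hi => ?_) (fun i hi => ?_)
  all_goals rw [mem_Ico] at hi
  · rw [Padic.norm_two_pow_div_natCast f (by omega)]
    have hvi := padicValNat_lt_of_lt_pow_s10 (by omega) (hi.2.trans hk')
    exact zpow_le_one_of_nonpos₀ one_le_two (by omega)
  · rw [norm_mul, Padic.norm_two_pow_div_natCast f (by omega),
      Padic.norm_two_pow_div_natCast f (by omega), ← zpow_add₀ two_ne_zero]
    have hvki := padicValNat_two_add_padicValNat_two_le (a := k) (b := i) (by omega) (by omega)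
      (by omega) hk' (hi.2.trans hk')
    exact zpow_le_zpow_right₀ one_le_two (by omega)

theorem stmt_10 (e f : ℕ) (he : 0 < e) (hef : e ≤ f)
    (k : ℕ) (hk : 0 < k) (hk' : k < 2 ^ e) :
    ‖(((2 ^ f).choose k : ℚ_[2]) - (-1) ^ (k - 1) * (2 : ℚ_[2]) ^ f / (k : ℚ_[2]))‖ ≤
      (2 : ℝ) ^ (-(2 * (f : ℤ) - 2 * e + 3)) :=
  stmt_10_general e f hef k hk hk'
end

section
/- Let p be a prime power p and q = p^f with p^e ≤ q. For 0 < k < p^e, the binomial coefficient C(q,k) is divisible by p^{f-e+1}. -/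
/-! By Kummer's theorem `v_p(C(p^f, k)) = f - v_p(k)` for `0 < k ≤ p^f`, and `v_p(k) < e`
because `p^(v_p(k)) ≤ k < p^e`. -/

namespace Nat

theorem factorization_lt_of_lt_pow {p k e : ℕ} (hp : 1 < p) (hk : k ≠ 0) (hke : k < p ^ e) :
    k.factorization p < e :=
  (Nat.pow_lt_pow_iff_right hp).1 ((ordProj_le p hk).trans_lt hke)

theorem pow_sub_factorization_dvd_choose_prime_pow {p n k : ℕ} (hp : p.Prime) (hkn : k ≤ p ^ n)
    (hk : k ≠ 0) : p ^ (n - k.factorization p) ∣ (p ^ n).choose k := by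
  rw [← factorization_choose_prime_pow hp hkn hk]
  exact ordProj_dvd _ _

end Nat

theorem stmt_11_general (p : ℕ) (hp : p.Prime) (e f : ℕ) (hef : e ≤ f)
    (k : ℕ) (hk : 0 < k) (hk' : k < p ^ e) :
    p ^ (f - e + 1) ∣ (p ^ f).choose k := by
  have hkf : k ≤ p ^ f := hk'.le.trans (Nat.pow_le_pow_right hp.pos hef)
  have hval : k.factorization p < e := Nat.factorization_lt_of_lt_pow hp.one_lt hk.ne' hk'
  exact (pow_dvd_pow p (by omega)).trans
    (Nat.pow_sub_factorization_dvd_choose_prime_pow hp hkf hk.ne')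

theorem stmt_11 (p : ℕ) (hp : p.Prime) (e f : ℕ) (he : 0 < e) (hef : e ≤ f)
    (k : ℕ) (hk : 0 < k) (hk' : k < p ^ e) :
    p ^ (f - e + 1) ∣ (p ^ f).choose k :=
  stmt_11_general p hp e f hef k hk hk'
end

section
/- Let p be a prime, q = p^f, and p^e ≤ q. Then for 0 < k ≤ p^e, C(q-1, k-1) ≡ (-1)^{k-1} (mod p^{f-e+1}). -/
/-!
Put `C m = (n.choose m : ℤ)`, where `p ^ N ∣ n + 1`. From `(m + 1) C (m + 1) = (n - m) C m`,
`(m + 1) (C (m + 1) - (-1) ^ (m + 1)) = (n + 1) C m - (m + 1) (C m - (-1) ^ m)`.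
If `p ^ r` divides `C m - (-1) ^ m` and `p ^ a` exactly divides `m + 1` with `a + r ≤ N`, the
right side is divisible by `p ^ (a + r)`, so `p ^ r` divides `C (m + 1) - (-1) ^ (m + 1)`.
For `m + 1 < p ^ e` we have `a < e`, so `r = N - e + 1` works all the way up to `m = p ^ e - 1`.
-/

theorem Int.pow_dvd_of_pow_factorization_add_dvd_mul {p : ℕ} (hp : p.Prime) {n : ℕ}
    (hn : n ≠ 0) {x : ℤ} {r : ℕ} (h : (p : ℤ) ^ (n.factorization p + r) ∣ n * x) :
    (p : ℤ) ^ r ∣ x := by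
  set a := n.factorization p
  set t := n / p ^ a
  have hn_eq : ((p : ℤ) ^ a) * t = n := by exact_mod_cast Nat.ordProj_mul_ordCompl_eq_self n p
  have hcop : IsCoprime ((p : ℤ) ^ r) t := by
    have : Nat.Coprime (p ^ r) t :=
      Nat.Coprime.pow_left _ (hp.coprime_iff_not_dvd.mpr (Nat.not_dvd_ordCompl hp hn))
    exact_mod_cast Nat.isCoprime_iff_coprime.mpr this
  have hpa : (p : ℤ) ^ a ≠ 0 := pow_ne_zero _ (by exact_mod_cast hp.ne_zero)
  rw [← hn_eq, pow_add, mul_assoc, mul_dvd_mul_iff_left hpa] at h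
  exact hcop.dvd_of_dvd_mul_left h

theorem Nat.choose_succ_sub_neg_one_pow_mul {n m : ℕ} (hm : m ≤ n) :
    ((n.choose (m + 1) : ℤ) - (-1) ^ (m + 1)) * (m + 1)
      = (n + 1) * n.choose m - (m + 1) * ((n.choose m : ℤ) - (-1) ^ m) := by
  have h : ((n.choose (m + 1) * (m + 1) : ℕ) : ℤ) = (n.choose m * (n - m) : ℕ) := by
    rw [Nat.choose_succ_right_eq]
  push_cast [hm] at h
  linear_combination h

theorem Nat.choose_modEq_neg_one_pow {p : ℕ} (hp : p.Prime) {n N e : ℕ} (hn : p ^ N ∣ n + 1)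
    (heN : e ≤ N) {m : ℕ} (hm : m < p ^ e) :
    (n.choose m : ℤ) ≡ (-1) ^ m [ZMOD (p : ℤ) ^ (N - e + 1)] := by
  induction m with
  | zero => simp
  | succ m ih =>
    have hmn : m + 1 ≤ n := by
      have := Nat.le_of_dvd n.succ_pos hn
      have := Nat.pow_le_pow_right hp.pos heN
      omega
    have ha : (m + 1).factorization p < e := by
      refine (Nat.pow_lt_pow_iff_right hp.one_lt).mp (lt_of_le_of_lt ?_ hm)
      exact Nat.le_of_dvd m.succ_pos (Nat.ordProj_dvd _ _)
    have hdvd : ((p : ℤ) ^ ((m + 1).factorization p + (N - e + 1))) ∣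
        (m + 1 : ℕ) * ((n.choose (m + 1) : ℤ) - (-1) ^ (m + 1)) := by
      rw [mul_comm]
      push_cast
      rw [Nat.choose_succ_sub_neg_one_pow_mul (by omega)]
      apply _root_.dvd_sub
      · refine Dvd.dvd.mul_right ((pow_dvd_pow _ (by omega : _ ≤ N)).trans ?_) _
        exact_mod_cast hn
      · rw [pow_add]
        refine mul_dvd_mul ?_ (Int.ModEq.dvd (ih (by omega)).symm)
        exact_mod_cast Nat.ordProj_dvd (m + 1) p
    exact (Int.modEq_iff_dvd.mpr
      (Int.pow_dvd_of_pow_factorization_add_dvd_mul hp m.succ_ne_zero hdvd)).symm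

theorem stmt_12_general (p : ℕ) (hp : p.Prime) (e f : ℕ) (hef : e ≤ f)
    (k : ℕ) (hk' : k ≤ p ^ e) :
    ((p ^ f - 1).choose (k - 1) : ℤ) ≡ (-1) ^ (k - 1) [ZMOD (p : ℤ) ^ (f - e + 1)] :=
  Nat.choose_modEq_neg_one_pow hp (by rw [Nat.sub_add_cancel (Nat.one_le_pow _ _ hp.pos)]) hef
    (by have := Nat.one_le_pow e p hp.pos; omega)

theorem stmt_12 (p : ℕ) (hp : p.Prime) (e f : ℕ) (he : 0 < e) (hef : e ≤ f)
    (k : ℕ) (hk : 0 < k) (hk' : k ≤ p ^ e) :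
    ((p ^ f - 1).choose (k - 1) : ℤ) ≡ (-1) ^ (k - 1) [ZMOD (p : ℤ) ^ (f - e + 1)] :=
  stmt_12_general p hp e f hef k hk'
end

section
/- Let p > 3 be a prime and let p^e ≤ p^f be powers of p with e ≤ f. Then C(2p^f, p^f) ≡ C(2p^e, p^e) (mod p^{3e+3}). -/
/-!
Let `P = p * n` with `n = p ^ k`, and write `∏*`, `∑*` for products and sums over `1 ≤ i ≤ P`
prime to `p`. Splitting `(2P)! / P! = ∏_{i ≤ P} (P + i)` and `P!` according to whether `p ∣ i`
gives `C(2P, P) ∏* i = C(2n, n) ∏* (P + i)`. Modulo `P³`,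
`∏* (1 + P / i) = 1 + P σ₁ + P² (σ₁² - σ₂) / 2` with `σ₁ = ∑* 1 / i` and `σ₂ = ∑* 1 / i²`.
Multiplication by `2` permutes the units mod `P` and `2² - 1` is invertible, so `σ₂ ≡ 0 mod P`;
pairing `i` with `P - i` then gives `2 σ₁ = P ∑* 1 / (i (P - i)) ≡ -P σ₂ ≡ 0 mod P²`.
Hence `∏* (P + i) ≡ ∏* i mod P³`, and `∏* i` is prime to `p`.
-/

open Finset
open scoped Nat

theorem two_mul_prod_one_add_mul_of_pow_three_eq_zero {R ι : Type*} [CommRing R] {ε : R}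
    (hε : ε ^ 3 = 0) (s : Finset ι) (b : ι → R) :
    2 * ∏ i ∈ s, (1 + ε * b i) =
      2 + 2 * ε * ∑ i ∈ s, b i + ε ^ 2 * ((∑ i ∈ s, b i) ^ 2 - ∑ i ∈ s, b i ^ 2) := by
  classical
  induction s using Finset.induction_on with
  | empty => simp
  | insert a s ha ih =>
    rw [prod_insert ha, sum_insert ha, sum_insert ha, mul_left_comm, ih]
    linear_combination (b a * ((∑ i ∈ s, b i) ^ 2 - ∑ i ∈ s, b i ^ 2)) * hε

theorem prod_add_eq_prod_of_pow_three_eq_zero {R ι : Type*} [CommRing R] {ε : R}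
    (hε : ε ^ 3 = 0) (h2 : IsUnit (2 : R)) {s : Finset ι} {σ : ι → ι}
    (hσ : ∀ i ∈ s, σ i ∈ s) (hσσ : ∀ i ∈ s, σ (σ i) = i) {a b : ι → R}
    (hab : ∀ i ∈ s, a i * b i = 1) (haσ : ∀ i ∈ s, a (σ i) = ε - a i)
    (hb : ε ∣ ∑ i ∈ s, b i ^ 2) :
    ∏ i ∈ s, (ε + a i) = ∏ i ∈ s, a i := by
  obtain ⟨c, hc⟩ := hb
  have hpair : ∀ i ∈ s, ε * (b i + b (σ i)) = -(ε ^ 2 * b i ^ 2) := fun i hi => by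
    have h1 := hab i hi
    have h2 := hab (σ i) (hσ i hi)
    rw [haσ i hi] at h2
    linear_combination (b i ^ 2 * b (σ i)) * hε - (ε ^ 2 * b i * b (σ i) + ε * b (σ i)) * h1
      - (ε ^ 2 * b i ^ 2 + ε * b i) * h2
  have hsum : ε * ∑ i ∈ s, b i = 0 := by
    have hσsum : ∑ i ∈ s, b (σ i) = ∑ i ∈ s, b i :=
      sum_nbij' σ σ hσ hσ hσσ hσσ fun _ _ => rfl
    refine (h2.mul_right_eq_zero).mp ?_
    calc 2 * (ε * ∑ i ∈ s, b i) = ∑ i ∈ s, ε * (b i + b (σ i)) := by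
          rw [← mul_sum, sum_add_distrib, hσsum]; ring
      _ = -(ε ^ 3 * c) := by rw [sum_congr rfl hpair, sum_neg_distrib, ← mul_sum, hc]; ring
      _ = 0 := by rw [hε, zero_mul, neg_zero]
  have hprod : ∏ i ∈ s, (1 + ε * b i) = 1 := by
    refine h2.mul_left_cancel ?_
    rw [two_mul_prod_one_add_mul_of_pow_three_eq_zero hε, hc]
    linear_combination (2 + ε * ∑ i ∈ s, b i) * hsum - c * hε
  calc ∏ i ∈ s, (ε + a i) = ∏ i ∈ s, (a i * (1 + ε * b i)) :=
        prod_congr rfl fun i hi => by linear_combination (-ε) * hab i hi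
    _ = ∏ i ∈ s, a i := by rw [prod_mul_distrib, hprod, mul_one]

theorem sum_units_sq_eq_zero {R : Type*} [CommRing R] [Fintype Rˣ] (c : Rˣ)
    (hc : IsUnit ((c : R) ^ 2 - 1)) : ∑ u : Rˣ, (u : R) ^ 2 = 0 := by
  have hmul : ∑ u : Rˣ, ((c * u : Rˣ) : R) ^ 2 = ∑ u : Rˣ, (u : R) ^ 2 :=
    Equiv.sum_comp (Equiv.mulLeft c) fun u : Rˣ => (u : R) ^ 2
  refine hc.mul_right_eq_zero.mp ?_
  simp only [Units.val_mul, mul_pow, ← mul_sum] at hmul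
  rw [sub_mul, hmul, one_mul, sub_self]

theorem natCast_dvd_of_castHom_eq_zero {m n : ℕ} (h : m ∣ n) {x : ZMod n}
    (hx : ZMod.castHom h (ZMod m) x = 0) : (m : ZMod n) ∣ x := by
  rw [← ZMod.intCast_zmod_cast x] at hx ⊢
  rw [map_intCast, ZMod.intCast_zmod_eq_zero_iff_dvd] at hx
  obtain ⟨k, hk⟩ := hx
  exact ⟨k, by rw [hk]; push_cast; ring⟩

theorem sum_filter_coprime_range_eq_sum_units {M : Type*} [AddCommMonoid M] (n : ℕ) [NeZero n]
    (g : ZMod n → M) :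
    ∑ i ∈ (range n).filter (Nat.Coprime · n), g i = ∑ u : (ZMod n)ˣ, g u := by
  refine sum_bij (fun i hi => ZMod.unitOfCoprime i (mem_filter.mp hi).2) (fun _ _ => mem_univ _)
    (fun i hi j hj hij => ?_) (fun u _ => ?_) (fun _ _ => rfl)
  · have := congrArg Units.val hij
    simp only [ZMod.coe_unitOfCoprime, ZMod.natCast_eq_natCast_iff'] at this
    rwa [Nat.mod_eq_of_lt (mem_range.mp (mem_filter.mp hi).1),
      Nat.mod_eq_of_lt (mem_range.mp (mem_filter.mp hj).1)] at this
  · refine ⟨(u : ZMod n).val, mem_filter.mpr ⟨mem_range.mpr (ZMod.val_lt _),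
      ZMod.val_coe_unit_coprime u⟩, Units.ext ?_⟩
    simp only [ZMod.coe_unitOfCoprime, ZMod.natCast_zmod_val]

theorem sum_inv_sq_filter_coprime_range_eq_zero {n : ℕ} (hn : Nat.Coprime 6 n) :
    ∑ i ∈ (range n).filter (Nat.Coprime · n), ((i : ZMod n)⁻¹) ^ 2 = 0 := by
  have : NeZero n := ⟨by rintro rfl; norm_num at hn⟩
  have hunit (m : ℕ) (hm : m ∣ 6) : IsUnit (m : ZMod n) :=
    (ZMod.isUnit_iff_coprime m n).mpr (hn.coprime_dvd_left hm)
  rw [sum_filter_coprime_range_eq_sum_units n fun x => (x⁻¹) ^ 2]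
  simp only [ZMod.inv_coe_unit]
  refine (Equiv.sum_comp (Equiv.inv _) fun u : (ZMod n)ˣ => (u : ZMod n) ^ 2).trans ?_
  refine sum_units_sq_eq_zero (hunit 2 (by norm_num)).unit ?_
  convert hunit 3 (by norm_num) using 1
  simp only [IsUnit.unit_spec]
  norm_num

theorem prod_filter_coprime_range_add_modEq {n : ℕ} (hn : Nat.Coprime 6 n) :
    ∏ i ∈ (range n).filter (Nat.Coprime · n), (n + i) ≡
      ∏ i ∈ (range n).filter (Nat.Coprime · n), i [MOD n ^ 3] := by
  rcases eq_or_ne n 1 with rfl | hn1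
  · exact Nat.modEq_one
  set S := (range n).filter (Nat.Coprime · n)
  have hS : ∀ i ∈ S, 0 < i ∧ i < n ∧ Nat.Coprime i n := fun i hi => by
    obtain ⟨hin, hcop⟩ := mem_filter.mp hi
    refine ⟨Nat.pos_of_ne_zero ?_, mem_range.mp hin, hcop⟩
    rintro rfl
    exact hn1 (Nat.coprime_zero_left n |>.mp hcop)
  rw [← ZMod.natCast_eq_natCast_iff]
  push_cast
  refine prod_add_eq_prod_of_pow_three_eq_zero (σ := (n - ·)) (b := fun i => ((i : ZMod (n ^ 3)))⁻¹)
    ?_ ?_ (fun i hi => ?_) (fun i hi => ?_) (fun i hi => ?_) (fun i hi => ?_) ?_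
  · rw [← Nat.cast_pow, ZMod.natCast_self]
  · exact_mod_cast (ZMod.isUnit_iff_coprime 2 (n ^ 3)).mpr
      ((hn.coprime_dvd_left (by norm_num)).pow_right 3)
  · obtain ⟨hi0, hin, hcop⟩ := hS i hi
    exact mem_filter.mpr ⟨mem_range.mpr (by omega), (Nat.coprime_self_sub_left hin.le).mpr hcop⟩
  · have := (hS i hi).2.1
    omega
  · exact ZMod.mul_inv_of_unit _ ((ZMod.isUnit_iff_coprime i _).mpr ((hS i hi).2.2.pow_right 3))
  · exact Nat.cast_sub (hS i hi).2.1.le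
  · set π := ZMod.castHom (dvd_pow_self n three_ne_zero) (ZMod n)
    refine natCast_dvd_of_castHom_eq_zero (dvd_pow_self n three_ne_zero) ?_
    rw [← sum_inv_sq_filter_coprime_range_eq_zero hn, map_sum]
    refine sum_congr rfl fun i hi => ?_
    have hunit := (ZMod.isUnit_iff_coprime i (n ^ 3)).mpr ((hS i hi).2.2.pow_right 3)
    rw [map_pow, ZMod.inv_eq_of_mul_eq_one _ _ (π (i : ZMod (n ^ 3))⁻¹)]
    rw [← map_natCast π i, ← map_mul, ZMod.mul_inv_of_unit _ hunit, map_one]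

theorem prod_Ico_eq_prod_filter_not_dvd_mul {M : Type*} [CommMonoid M] {p : ℕ} (hp : 0 < p)
    (n : ℕ) (f : ℕ → M) :
    ∏ i ∈ Ico 1 (p * n + 1), f i =
      (∏ i ∈ (Ico 1 (p * n + 1)).filter (¬ p ∣ ·), f i) * ∏ j ∈ Ico 1 (n + 1), f (p * j) := by
  have hdvd : (Ico 1 (p * n + 1)).filter (p ∣ ·) =
      (Ico 1 (n + 1)).map ⟨(p * ·), mul_right_injective₀ hp.ne'⟩ := by
    ext x
    simp only [mem_filter, mem_Ico, mem_map, Function.Embedding.coeFn_mk]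
    constructor
    · rintro ⟨⟨hx1, hxn⟩, j, rfl⟩
      exact ⟨j, ⟨Nat.pos_of_mul_pos_left hx1, Nat.lt_succ_of_le
        (Nat.le_of_mul_le_mul_left (Nat.le_of_lt_succ hxn) hp)⟩, rfl⟩
    · rintro ⟨j, ⟨hj1, hjn⟩, rfl⟩
      exact ⟨⟨Nat.mul_pos hp hj1, Nat.lt_succ_of_le (Nat.mul_le_mul_left p
        (Nat.le_of_lt_succ hjn))⟩, dvd_mul_right p j⟩
  rw [← prod_filter_mul_prod_filter_not _ (p ∣ ·), mul_comm, hdvd, prod_map]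
  rfl

theorem prod_Ico_add_self (k : ℕ) : ∏ i ∈ Ico 1 (k + 1), (k + i) = k ! * (2 * k).choose k := by
  rw [two_mul, ← Nat.ascFactorial_eq_factorial_mul_choose, Nat.ascFactorial_eq_prod_range,
    range_eq_Ico, ← prod_Ico_add' (fun i => k + i) 0 k 1]
  exact prod_congr rfl fun i _ => by ring

theorem choose_mul_prod_filter_not_dvd {p : ℕ} (hp : 0 < p) (n : ℕ) :
    (2 * (p * n)).choose (p * n) * ∏ i ∈ (Ico 1 (p * n + 1)).filter (¬ p ∣ ·), i =
      (2 * n).choose n * ∏ i ∈ (Ico 1 (p * n + 1)).filter (¬ p ∣ ·), (p * n + i) := by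
  have hcard : #(Ico 1 (n + 1)) = n := by simp
  have hfact : (p * n)! = (∏ i ∈ (Ico 1 (p * n + 1)).filter (¬ p ∣ ·), i) * (p ^ n * n !) := by
    rw [← prod_Ico_id_eq_factorial, prod_Ico_eq_prod_filter_not_dvd_mul hp, prod_mul_distrib,
      prod_const, hcard, prod_Ico_id_eq_factorial]
  have hshift : (p * n)! * (2 * (p * n)).choose (p * n) =
      (∏ i ∈ (Ico 1 (p * n + 1)).filter (¬ p ∣ ·), (p * n + i)) *
        (p ^ n * (n ! * (2 * n).choose n)) := by
    rw [← prod_Ico_add_self, prod_Ico_eq_prod_filter_not_dvd_mul hp, ← prod_Ico_add_self]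
    congr 1
    simp_rw [← mul_add]
    rw [prod_mul_distrib, prod_const, hcard]
  refine Nat.eq_of_mul_eq_mul_right (Nat.mul_pos (pow_pos hp n) n.factorial_pos) ?_
  calc _ = (p * n)! * (2 * (p * n)).choose (p * n) := by rw [hfact]; ring
    _ = _ := by rw [hshift]; ring

theorem filter_not_dvd_Ico_eq_filter_coprime_range {p k : ℕ} (hp : p.Prime) (hk : k ≠ 0) :
    (Ico 1 (p ^ k + 1)).filter (¬ p ∣ ·) = (range (p ^ k)).filter (Nat.Coprime · (p ^ k)) := by
  ext i
  simp only [mem_filter, mem_Ico, mem_range, Nat.coprime_pow_right_iff (Nat.pos_of_ne_zero hk),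
    Nat.coprime_comm.trans hp.coprime_iff_not_dvd]
  have h0 : i = 0 → p ∣ i := fun h => h ▸ dvd_zero p
  have hpk : i = p ^ k → p ∣ i := fun h => h ▸ dvd_pow_self p hk
  constructor
  · rintro ⟨⟨_, hi⟩, hndvd⟩
    exact ⟨lt_of_le_of_ne (Nat.le_of_lt_succ hi) (mt hpk hndvd), hndvd⟩
  · rintro ⟨hi, hndvd⟩
    exact ⟨⟨Nat.pos_of_ne_zero (mt h0 hndvd), Nat.lt_succ_of_lt hi⟩, hndvd⟩

theorem choose_two_mul_pow_succ_modEq {p : ℕ} (hp : p.Prime) (hp3 : 3 < p) (k : ℕ) :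
    (2 * p ^ (k + 1)).choose (p ^ (k + 1)) ≡ (2 * p ^ k).choose (p ^ k)
      [MOD p ^ (3 * k + 3)] := by
  set P := p ^ (k + 1)
  have hS := filter_not_dvd_Ico_eq_filter_coprime_range hp k.succ_ne_zero
  have hcop6 : Nat.Coprime 6 P := Nat.Coprime.pow_right _ <| Nat.Coprime.mul_left
    ((Nat.coprime_primes Nat.prime_two hp).mpr (by omega))
    ((Nat.coprime_primes Nat.prime_three hp).mpr (by omega))
  have hid := choose_mul_prod_filter_not_dvd hp.pos (p ^ k)
  rw [← pow_succ', hS] at hid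
  have hcopD : Nat.Coprime (P ^ 3) (∏ i ∈ (range P).filter (Nat.Coprime · P), i) :=
    Nat.Coprime.prod_right fun i hi => ((mem_filter.mp hi).2.pow_right 3).symm
  rw [show 3 * k + 3 = (k + 1) * 3 by ring, pow_mul]
  refine Nat.ModEq.cancel_right_of_coprime hcopD ?_
  rw [hid]
  exact (prod_filter_coprime_range_add_modEq hcop6).mul_left _

theorem stmt_15_general (p : ℕ) (hp : p.Prime) (hp3 : 3 < p) (e f : ℕ) (hef : e ≤ f) :
    (2 * p ^ f).choose (p ^ f) ≡ (2 * p ^ e).choose (p ^ e) [MOD p ^ (3 * e + 3)] := by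
  induction f, hef using Nat.le_induction with
  | base => rfl
  | succ f hef ih =>
    exact (Nat.ModEq.of_dvd (pow_dvd_pow p (by omega))
      (choose_two_mul_pow_succ_modEq hp hp3 f)).trans ih

theorem stmt_15 (p : ℕ) (hp : p.Prime) (hp3 : 3 < p) (e f : ℕ) (he : 0 < e) (hef : e ≤ f) :
    (2 * p ^ f).choose (p ^ f) ≡ (2 * p ^ e).choose (p ^ e) [MOD p ^ (3 * e + 3)] :=
  stmt_15_general p hp hp3 e f hef
end

section
/- Let 3^e ≤ 3^f with e ≤ f. Then C(2·3^f, 3^f) ≡ C(2·3^e, 3^e) (mod 3^{3e+2}). -/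
/-!
Let `p` be an odd prime, `M = p^(k+1)`, `P` the product of the `j ∈ [1, M]` prime to `p`, and
`Q = ∏ (M + j)` over the same `j`. Separating the multiples of `p` in the factorials gives
`C(2M, M) · P = C(2p^k, p^k) · Q`, so it suffices that `Q ≡ P (mod p^(3k+2))`.
Pairing `j` with `M - j` gives `P² = ∏ j (M - j)` and `Q² = ∏ (j (M - j) + 2M²)`. As `(2M²)²`
vanishes, `Q² - P²` is `2M²` times `∑_j ∏_{i ≠ j} i (M - i) ≡ -P² ∑ j⁻² ≡ -P² ∑ j² (mod p^k)`,
and `p^k ∣ ∑ j²` by the closed form of sums of squares. So `Q² ≡ P²`, and since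
`Q ≡ P ≢ 0 (mod p)` with `p` odd, `Q ≡ P`. Induction on the exponent finishes the proof.
-/

open Finset Nat

def primeToIcc (p n : ℕ) : Finset ℕ := {j ∈ Ico 1 (n + 1) | ¬ p ∣ j}

def primeToFactorial (p n : ℕ) : ℕ := ∏ j ∈ primeToIcc p n, j

section

variable {p : ℕ}

theorem mem_primeToIcc {n j : ℕ} : j ∈ primeToIcc p n ↔ 1 ≤ j ∧ j ≤ n ∧ ¬ p ∣ j := by
  simp only [primeToIcc, mem_filter, mem_Ico, Nat.lt_succ_iff, and_assoc]

theorem lt_of_mem_primeToIcc {m j : ℕ} (hm : p ∣ m) (hj : j ∈ primeToIcc p m) : j < m := by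
  obtain ⟨-, hjm, hpj⟩ := mem_primeToIcc.mp hj
  exact lt_of_le_of_ne hjm (by rintro rfl; exact hpj hm)

theorem filter_dvd_Ico_one_mul (hp : 0 < p) (n : ℕ) :
    {x ∈ Ico 1 (p * n + 1) | p ∣ x} =
      (Ico 1 (n + 1)).map ⟨(p * ·), mul_right_injective₀ hp.ne'⟩ := by
  ext x
  simp only [mem_filter, mem_Ico, mem_map, Function.Embedding.coeFn_mk]
  constructor
  · rintro ⟨⟨hx1, hxn⟩, c, rfl⟩
    refine ⟨c, ⟨Nat.pos_of_mul_pos_left hx1, ?_⟩, rfl⟩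
    exact Nat.lt_succ_of_le (Nat.le_of_mul_le_mul_left (Nat.le_of_lt_succ hxn) hp)
  · rintro ⟨c, ⟨hc1, hcn⟩, rfl⟩
    refine ⟨⟨Nat.mul_pos hp hc1, Nat.lt_succ_of_le ?_⟩, dvd_mul_right p c⟩
    exact Nat.mul_le_mul_left p (Nat.le_of_lt_succ hcn)

theorem factorial_mul_eq_pow_mul_primeToFactorial (hp : 0 < p) (n : ℕ) :
    (p * n)! = p ^ n * n ! * primeToFactorial p (p * n) := by
  rw [← prod_Ico_id_eq_factorial, ← prod_filter_mul_prod_filter_not _ (p ∣ ·),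
    filter_dvd_Ico_one_mul hp, prod_map]
  simp only [Function.Embedding.coeFn_mk]
  rw [prod_mul_distrib, prod_const, Nat.card_Ico, Nat.add_sub_cancel, prod_Ico_id_eq_factorial]
  rfl

theorem primeToFactorial_two_mul {m : ℕ} (hm : p ∣ m) :
    primeToFactorial p (2 * m) = primeToFactorial p m * ∏ j ∈ primeToIcc p m, (m + j) := by
  simp only [primeToFactorial, primeToIcc, prod_filter]
  have hshift := prod_Ico_add' (fun i => if ¬p ∣ i then i else 1) 1 (m + 1) m
  rw [show 1 + m = m + 1 by omega, show m + 1 + m = 2 * m + 1 by omega] at hshift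
  rw [← prod_Ico_consecutive _ (Nat.le_add_left 1 m) (by omega : m + 1 ≤ 2 * m + 1), ← hshift]
  simp only [add_comm _ m, Nat.dvd_add_right hm]

theorem centralBinom_mul_primeToFactorial (hp : 0 < p) (n : ℕ) :
    centralBinom (p * n) * primeToFactorial p (p * n) =
      centralBinom n * ∏ j ∈ primeToIcc p (p * n), (p * n + j) := by
  have hfact : ∀ m, centralBinom m * m ! * m ! = (2 * m)! := fun m => by
    rw [centralBinom_eq_two_mul_choose, two_mul, add_choose_mul_factorial_mul_factorial]
  have hpos : 0 < p ^ (2 * n) * (n ! * n !) * primeToFactorial p (p * n) := by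
    have : 0 < primeToFactorial p (p * n) :=
      prod_pos fun j hj => (mem_primeToIcc.mp hj).1
    positivity
  refine Nat.eq_of_mul_eq_mul_left hpos ?_
  calc _ = centralBinom (p * n) * (p * n)! * (p * n)! := by
        rw [factorial_mul_eq_pow_mul_primeToFactorial hp]; ring
    _ = p ^ (2 * n) * (2 * n)! * primeToFactorial p (2 * (p * n)) := by
        rw [hfact, mul_left_comm, factorial_mul_eq_pow_mul_primeToFactorial hp]
    _ = _ := by
        rw [← hfact, primeToFactorial_two_mul (dvd_mul_right p n)]; ring

theorem prod_primeToIcc_reflect {M : Type*} [CommMonoid M] {m : ℕ} (hm : p ∣ m) (f : ℕ → M) :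
    ∏ j ∈ primeToIcc p m, f (m - j) = ∏ j ∈ primeToIcc p m, f j := by
  have hinv : ∀ j ∈ primeToIcc p m, m - (m - j) = j := fun j hj =>
    Nat.sub_sub_self (lt_of_mem_primeToIcc hm hj).le
  have hmem : ∀ j ∈ primeToIcc p m, m - j ∈ primeToIcc p m := fun j hj => by
    have hjm := lt_of_mem_primeToIcc hm hj
    refine mem_primeToIcc.mpr ⟨by omega, by omega, fun h => ?_⟩
    exact (mem_primeToIcc.mp hj).2.2 (hinv j hj ▸ Nat.dvd_sub hm h)
  exact prod_nbij' (m - ·) (m - ·) hmem hmem hinv hinv fun _ _ => rfl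

theorem primeToFactorial_sq {m : ℕ} (hm : p ∣ m) :
    primeToFactorial p m ^ 2 = ∏ j ∈ primeToIcc p m, j * (m - j) := by
  rw [sq, prod_mul_distrib, primeToFactorial]
  nth_rw 2 [← prod_primeToIcc_reflect hm]

theorem prod_primeToIcc_add_sq {m : ℕ} (hm : p ∣ m) :
    (∏ j ∈ primeToIcc p m, (m + j)) ^ 2 = ∏ j ∈ primeToIcc p m, (j * (m - j) + 2 * m ^ 2) := by
  rw [sq]
  nth_rw 2 [← prod_primeToIcc_reflect hm]
  rw [← prod_mul_distrib]
  refine prod_congr rfl fun j hj => ?_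
  obtain ⟨d, rfl⟩ := Nat.exists_eq_add_of_le (lt_of_mem_primeToIcc hm hj).le
  rw [Nat.add_sub_cancel_left]
  ring

theorem six_mul_sum_Ico_sq (n : ℕ) :
    6 * ∑ j ∈ Ico 1 (n + 1), j ^ 2 = n * (n + 1) * (2 * n + 1) := by
  induction n with
  | zero => simp
  | succ n ih => rw [sum_Ico_succ_top (by omega), mul_add, ih]; ring

theorem pow_dvd_sum_sq_primeToIcc (hp : p.Prime) (hp2 : p ≠ 2) (k : ℕ) :
    p ^ k ∣ ∑ j ∈ primeToIcc p (p ^ (k + 1)), j ^ 2 := by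
  set t := p ^ k
  set C := ∑ j ∈ primeToIcc p (p * t), j ^ 2
  rw [pow_succ']
  have hsplit : p ^ 2 * ∑ i ∈ Ico 1 (t + 1), i ^ 2 + C = ∑ j ∈ Ico 1 (p * t + 1), j ^ 2 := by
    rw [← sum_filter_add_sum_filter_not (Ico 1 (p * t + 1)) (p ∣ ·),
      filter_dvd_Ico_one_mul hp.pos, sum_map, mul_sum]
    simp only [Function.Embedding.coeFn_mk, mul_pow]
    rfl
  -- `6 C` is divisible by `p t`; the factor `3` of `6` can absorb one power of `p` when `p = 3`.
  have h6C : p * t ∣ 3 * C * 2 := by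
    have h6 := six_mul_sum_Ico_sq (p * t)
    rw [← hsplit, mul_add, mul_left_comm, six_mul_sum_Ico_sq] at h6
    have hB : p * t ∣ p ^ 2 * (t * (t + 1) * (2 * t + 1)) :=
      ⟨p * ((t + 1) * (2 * t + 1)), by ring⟩
    refine (Nat.dvd_add_right hB).mp ⟨(p * t + 1) * (2 * (p * t) + 1), ?_⟩
    linear_combination h6
  have hcop : ∀ q, q.Prime → p ≠ q → Nat.Coprime (p * t) q := fun q hq hpq =>
    have hpq' := (Nat.coprime_primes hp hq).mpr hpq
    hpq'.mul_left (hpq'.pow_left k)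
  have h3C : p * t ∣ 3 * C := (hcop 2 prime_two hp2).dvd_of_dvd_mul_right h6C
  rcases eq_or_ne p 3 with rfl | hp3
  · exact Nat.dvd_of_mul_dvd_mul_left three_pos h3C
  · exact dvd_of_mul_left_dvd ((hcop 3 prime_three hp3).dvd_of_dvd_mul_left h3C)

theorem isUnit_natCast_of_not_dvd (hp : p.Prime) {j : ℕ} (hj : ¬ p ∣ j) (a : ℕ) :
    IsUnit (j : ZMod (p ^ a)) :=
  (ZMod.isUnit_iff_coprime j _).mpr (((Nat.Prime.coprime_iff_not_dvd hp).mpr hj).symm.pow_right a)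

theorem sum_primeToIcc_inv {β : Type*} [AddCommMonoid β] (hp : p.Prime) {a : ℕ} (ha : a ≠ 0)
    (g : ZMod (p ^ a) → β) :
    ∑ j ∈ primeToIcc p (p ^ a), g (j : ZMod (p ^ a))⁻¹ = ∑ j ∈ primeToIcc p (p ^ a), g j := by
  have : NeZero (p ^ a) := ⟨pow_ne_zero a hp.ne_zero⟩
  have hpM : p ∣ p ^ a := dvd_pow_self p ha
  have hunit : ∀ j ∈ primeToIcc p (p ^ a), IsUnit (j : ZMod (p ^ a)) := fun j hj =>
    isUnit_natCast_of_not_dvd hp (mem_primeToIcc.mp hj).2.2 a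
  have hmem : ∀ j ∈ primeToIcc p (p ^ a), ((j : ZMod (p ^ a))⁻¹).val ∈ primeToIcc p (p ^ a) := by
    intro j hj
    have hinvunit : IsUnit (((j : ZMod (p ^ a))⁻¹).val : ZMod (p ^ a)) := by
      rw [ZMod.natCast_zmod_val]
      exact IsUnit.of_mul_eq_one _ (ZMod.inv_mul_of_unit _ (hunit j hj))
    have hpv : ¬ p ∣ ((j : ZMod (p ^ a))⁻¹).val := (Nat.Prime.coprime_iff_not_dvd hp).mp
      (((ZMod.isUnit_iff_coprime _ _).mp hinvunit).coprime_dvd_right hpM).symm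
    exact mem_primeToIcc.mpr ⟨Nat.pos_of_ne_zero fun h => hpv (h ▸ dvd_zero p),
      (ZMod.val_lt _).le, hpv⟩
  have hinv : ∀ j ∈ primeToIcc p (p ^ a),
      ((((j : ZMod (p ^ a))⁻¹).val : ZMod (p ^ a))⁻¹).val = j := by
    intro j hj
    rw [ZMod.natCast_zmod_val,
      ZMod.inv_eq_of_mul_eq_one _ _ _ (ZMod.inv_mul_of_unit _ (hunit j hj)),
      ZMod.val_cast_of_lt (lt_of_mem_primeToIcc hpM hj)]
  exact sum_nbij' _ _ hmem hmem hinv hinv fun j _ => by rw [ZMod.natCast_zmod_val]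

theorem sum_prod_erase_eq_mul_sum_inv {ι : Type*} [DecidableEq ι] {n : ℕ} (s : Finset ι)
    (b : ι → ZMod n) (hb : ∀ j ∈ s, IsUnit (b j)) :
    ∑ j ∈ s, ∏ i ∈ s.erase j, b i = (∏ i ∈ s, b i) * ∑ j ∈ s, (b j)⁻¹ := by
  rw [mul_sum]
  refine sum_congr rfl fun j hj => ?_
  rw [← mul_prod_erase s b hj, mul_comm (b j), mul_assoc, ZMod.mul_inv_of_unit _ (hb j hj),
    mul_one]

theorem prod_add_eq_of_sq_eq_zero {ι R : Type*} [DecidableEq ι] [CommSemiring R] (s : Finset ι)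
    (b : ι → R) {c : R} (hc : c ^ 2 = 0) :
    ∏ j ∈ s, (b j + c) = ∏ j ∈ s, b j + c * ∑ j ∈ s, ∏ i ∈ s.erase j, b i := by
  induction s using Finset.induction_on with
  | empty => simp
  | insert a s ha ih =>
    have herase : ∀ j ∈ s, ∏ i ∈ (insert a s).erase j, b i = b a * ∏ i ∈ s.erase j, b i :=
      fun j hj => by
        rw [erase_insert_of_ne (ne_of_mem_of_not_mem hj ha).symm,
          prod_insert fun h => ha (mem_of_mem_erase h)]
    rw [prod_insert ha, prod_insert ha, ih, sum_insert ha, erase_insert ha, sum_congr rfl herase,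
      ← mul_sum]
    set E := ∑ j ∈ s, ∏ i ∈ s.erase j, b i
    calc _ = b a * ∏ i ∈ s, b i + c * (∏ i ∈ s, b i + b a * E) + c ^ 2 * E := by ring
      _ = _ := by rw [hc, zero_mul, add_zero]

theorem pow_dvd_sum_prod_erase_primeToIcc (hp : p.Prime) (hp2 : p ≠ 2) (k : ℕ) :
    p ^ k ∣ ∑ j ∈ primeToIcc p (p ^ (k + 1)),
      ∏ i ∈ (primeToIcc p (p ^ (k + 1))).erase j, i * (p ^ (k + 1) - i) := by
  set M := p ^ (k + 1)
  set s := primeToIcc p M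
  have hpM : p ∣ M := dvd_pow_self p k.succ_ne_zero
  have hjunit : ∀ i ∈ s, IsUnit (i : ZMod M) := fun i hi =>
    isUnit_natCast_of_not_dvd hp (mem_primeToIcc.mp hi).2.2 _
  have hb : ∀ i ∈ s, ((i * (M - i) : ℕ) : ZMod M) = -(i : ZMod M) ^ 2 := fun i hi => by
    rw [Nat.cast_mul, Nat.cast_sub (lt_of_mem_primeToIcc hpM hi).le, ZMod.natCast_self]
    ring
  have hbunit : ∀ i ∈ s, IsUnit ((i * (M - i) : ℕ) : ZMod M) := fun i hi => by
    rw [hb i hi]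
    exact ((hjunit i hi).pow 2).neg
  have hbinv : ∀ i ∈ s, ((i * (M - i) : ℕ) : ZMod M)⁻¹ = -((i : ZMod M)⁻¹ ^ 2) := fun i hi => by
    refine ZMod.inv_eq_of_mul_eq_one _ _ _ ?_
    rw [hb i hi, neg_mul_neg, ← mul_pow, ZMod.mul_inv_of_unit _ (hjunit i hi), one_pow]
  -- modulo `M`, `i (M - i) = -i²`, and inversion permutes the residues prime to `p`
  have hE : ((∑ j ∈ s, ∏ i ∈ s.erase j, i * (M - i) : ℕ) : ZMod M) =
      -(∏ i ∈ s, ((i * (M - i) : ℕ) : ZMod M)) * ((∑ j ∈ s, j ^ 2 : ℕ) : ZMod M) := by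
    simp only [Nat.cast_sum, Nat.cast_prod]
    rw [sum_prod_erase_eq_mul_sum_inv _ _ hbunit, sum_congr rfl hbinv, sum_neg_distrib,
      sum_primeToIcc_inv hp k.succ_ne_zero (· ^ 2)]
    push_cast
    ring
  rw [← ZMod.natCast_eq_zero_iff]
  have hcast := congrArg (ZMod.castHom (pow_dvd_pow p k.le_succ) (ZMod (p ^ k))) hE
  simp only [map_mul, map_neg, map_natCast] at hcast
  rw [hcast, (ZMod.natCast_eq_zero_iff _ _).mpr (pow_dvd_sum_sq_primeToIcc hp hp2 k), mul_zero]

theorem not_dvd_primeToFactorial (hp : p.Prime) (n : ℕ) : ¬ p ∣ primeToFactorial p n := by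
  rw [primeToFactorial, Prime.dvd_finsetProd_iff hp.prime]
  rintro ⟨j, hj, hpj⟩
  exact (mem_primeToIcc.mp hj).2.2 hpj

theorem modEq_of_sq_modEq (hp : p.Prime) (hp2 : p ≠ 2) {x y n : ℕ} (hxy : x ≡ y [MOD p])
    (hy : ¬ p ∣ y) (h : x ^ 2 ≡ y ^ 2 [MOD p ^ n]) : x ≡ y [MOD p ^ n] := by
  have hxy2 : ¬ p ∣ x + y := by
    rw [(hxy.add_right y).dvd_iff dvd_rfl, ← two_mul, hp.dvd_mul,
      Nat.prime_dvd_prime_iff_eq hp prime_two]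
    tauto
  rw [← ZMod.natCast_eq_natCast_iff] at h ⊢
  push_cast at h
  have hunit : IsUnit ((x : ZMod (p ^ n)) + y) := by
    exact_mod_cast isUnit_natCast_of_not_dvd hp hxy2 n
  have hprod : ((x : ZMod (p ^ n)) - y) * (x + y) = 0 := by linear_combination h
  exact sub_eq_zero.mp (hunit.mul_left_eq_zero.mp hprod)

theorem prod_add_modEq_primeToFactorial (hp : p.Prime) (hp2 : p ≠ 2) (k : ℕ) :
    ∏ j ∈ primeToIcc p (p ^ (k + 1)), (p ^ (k + 1) + j) ≡
      primeToFactorial p (p ^ (k + 1)) [MOD p ^ (3 * k + 2)] := by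
  set M := p ^ (k + 1)
  set s := primeToIcc p M
  have hpM : p ∣ M := dvd_pow_self p k.succ_ne_zero
  refine modEq_of_sq_modEq hp hp2 ?_ (not_dvd_primeToFactorial hp M) ?_
  · exact Nat.ModEq.prod fun j _ => by
      simpa using (Nat.modEq_zero_iff_dvd.mpr hpM).add_right j
  rw [prod_primeToIcc_add_sq hpM, primeToFactorial_sq hpM, ← ZMod.natCast_eq_natCast_iff]
  have hc : ((2 * M ^ 2 : ℕ) : ZMod (p ^ (3 * k + 2))) ^ 2 = 0 := by
    rw [← Nat.cast_pow, ZMod.natCast_eq_zero_iff]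
    exact ⟨4 * p ^ (k + 2), by ring⟩
  have hcE : ((2 * M ^ 2 : ℕ) : ZMod (p ^ (3 * k + 2))) *
      ∑ j ∈ s, ∏ i ∈ s.erase j, ((i * (M - i) : ℕ) : ZMod (p ^ (3 * k + 2))) = 0 := by
    obtain ⟨E, hE⟩ := pow_dvd_sum_prod_erase_primeToIcc hp hp2 k
    have h := (ZMod.natCast_eq_zero_iff (2 * M ^ 2 * (p ^ k * E)) (p ^ (3 * k + 2))).mpr
      ⟨2 * E, by ring⟩
    rw [← hE] at h
    exact_mod_cast h
  simp only [Nat.cast_prod, Nat.cast_add]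
  rw [prod_add_eq_of_sq_eq_zero _ _ hc, hcE, add_zero]

theorem centralBinom_pow_succ_modEq (hp : p.Prime) (hp2 : p ≠ 2) (k : ℕ) :
    centralBinom (p ^ (k + 1)) ≡ centralBinom (p ^ k) [MOD p ^ (3 * k + 2)] := by
  have hcop : Nat.Coprime (p ^ (3 * k + 2)) (primeToFactorial p (p ^ (k + 1))) :=
    ((Nat.Prime.coprime_iff_not_dvd hp).mpr (not_dvd_primeToFactorial hp _)).pow_left _
  refine Nat.ModEq.cancel_right_of_coprime hcop ?_
  have hcentral := centralBinom_mul_primeToFactorial hp.pos (p ^ k)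
  rw [← pow_succ'] at hcentral
  rw [hcentral]
  exact (prod_add_modEq_primeToFactorial hp hp2 k).mul_left _

theorem centralBinom_pow_modEq (hp : p.Prime) (hp2 : p ≠ 2) {e f : ℕ} (hef : e ≤ f) :
    centralBinom (p ^ f) ≡ centralBinom (p ^ e) [MOD p ^ (3 * e + 2)] := by
  induction f, hef using Nat.le_induction with
  | base => rfl
  | succ n hen ih =>
    exact ((centralBinom_pow_succ_modEq hp hp2 n).of_dvd (pow_dvd_pow p (by omega))).trans ih

end

theorem stmt_16_general (e f : ℕ) (hef : e ≤ f) :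
    (2 * 3 ^ f).choose (3 ^ f) ≡ (2 * 3 ^ e).choose (3 ^ e) [MOD 3 ^ (3 * e + 2)] := by
  simpa only [centralBinom_eq_two_mul_choose] using
    centralBinom_pow_modEq prime_three (by norm_num) hef

theorem stmt_16 (e f : ℕ) (he : 0 < e) (hef : e ≤ f) :
    (2 * 3 ^ f).choose (3 ^ f) ≡ (2 * 3 ^ e).choose (3 ^ e) [MOD 3 ^ (3 * e + 2)] :=
  stmt_16_general e f hef
end

section
/- The 3-adic limit of C(2·3^f, 3^f) as f → ∞ exists; that is, the sequence f ↦ C(2·3^f, 3^f) is a Cauchy sequence in the 3-adic integers. -/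
/-!
Comparing coefficients of `X ^ (b * p ^ (f + 1))` in `(1 + X) ^ (a * p ^ (f + 1))` and in
`expand p ((1 + X) ^ (a * p ^ f)) = (1 + X ^ p) ^ (a * p ^ f)` gives
`C(a p^(f+1), b p^(f+1))` and `C(a p^f, b p^f)`. The two polynomials are the `p ^ f`-th powers of
`(1 + X) ^ (p a)` and `(1 + X ^ p) ^ a`, which agree mod `p`, so they agree mod `p ^ (f + 1)`.
Hence consecutive terms of `f ↦ C(a p^f, b p^f)` are `p`-adically within `p ^ -(f + 1)`.
-/

open Polynomial

namespace Nat.Prime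

variable {p : ℕ}

theorem natCast_dvd_one_add_X_pow_sub_expand (hp : p.Prime) :
    (p : ℤ[X]) ∣ (1 + X) ^ p - expand ℤ p (1 + X) := by
  obtain ⟨r, hr⟩ := exists_add_pow_prime_eq hp (1 : ℤ[X]) X
  exact ⟨X * r, by rw [hr, map_add, map_one, expand_X, one_pow]; ring⟩

theorem pow_succ_dvd_choose_mul_pow_succ_sub (hp : p.Prime) (a b f : ℕ) :
    (p : ℤ) ^ (f + 1) ∣
      ((a * p ^ (f + 1)).choose (b * p ^ (f + 1)) : ℤ) - ((a * p ^ f).choose (b * p ^ f) : ℤ) := by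
  have hpoly : (p : ℤ[X]) ^ (f + 1) ∣
      (1 + X) ^ (a * p ^ (f + 1)) - expand ℤ p ((1 + X) ^ (a * p ^ f)) := by
    have hbase := (hp.natCast_dvd_one_add_X_pow_sub_expand).trans
      (sub_dvd_pow_sub_pow ((1 + X) ^ p) (expand ℤ p (1 + X)) a)
    convert dvd_sub_pow_of_dvd_sub hbase f using 2
    · rw [← pow_mul, ← pow_mul, pow_succ]
      ring_nf
    · rw [← map_pow, ← map_pow, ← pow_mul]
  rw [← C_eq_natCast, ← C_pow, C_dvd_iff_dvd_coeff] at hpoly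
  simpa only [coeff_sub, coeff_one_add_X_pow, pow_succ, ← mul_assoc,
    coeff_expand_mul hp.pos, Nat.cast_id] using hpoly (b * p ^ (f + 1))

end Nat.Prime

namespace PadicInt

variable {p : ℕ} [Fact p.Prime]

theorem cauchySeq_intCast_of_pow_dvd_sub (u : ℕ → ℤ) (h : ∀ n, (p : ℤ) ^ n ∣ u (n + 1) - u n) :
    CauchySeq fun n => (u n : ℤ_[p]) := by
  have hp : (1 : ℝ) < p := mod_cast (Fact.out : p.Prime).one_lt
  refine cauchySeq_of_le_geometric (p : ℝ)⁻¹ 1 (inv_lt_one_of_one_lt₀ hp) fun n => ?_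
  have hnorm : ‖((u (n + 1) - u n : ℤ) : ℤ_[p])‖ ≤ (p : ℝ) ^ (-n : ℤ) :=
    norm_int_le_pow_iff_dvd.mpr (h n)
  rwa [dist_comm, dist_eq_norm, ← Int.cast_sub, one_mul, inv_pow, ← zpow_natCast, ← zpow_neg]

theorem cauchySeq_choose_mul_pow (a b : ℕ) :
    CauchySeq fun f : ℕ => ((a * p ^ f).choose (b * p ^ f) : ℤ_[p]) := by
  have hp : p.Prime := Fact.out
  simpa using cauchySeq_intCast_of_pow_dvd_sub (p := p)
    (fun f => ((a * p ^ f).choose (b * p ^ f) : ℤ))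
    fun f => (pow_dvd_pow _ f.le_succ).trans (hp.pow_succ_dvd_choose_mul_pow_succ_sub a b f)

end PadicInt

theorem stmt_17 :
    CauchySeq (fun f : ℕ => ((2 * 3 ^ f).choose (3 ^ f) : ℤ_[3])) := by
  simpa using PadicInt.cauchySeq_choose_mul_pow (p := 3) 2 1
end

section
/- For every positive integer n, the identity ∑_{k=1}^{n} (4^k/(2k))·C(2k,k)^{-1} = 4^n·C(2n,n)^{-1} − 1 holds in the rational numbers. -/
/-! The `k`-th summand is the increment `4^k / C(2k,k) - 4^(k-1) / C(2k-2,k-1)`, because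
`k * C(2k,k) = 2 (2k - 1) C(2k-2,k-1)`; the sum therefore telescopes. -/

open Nat

theorem four_pow_mul_centralBinom_inv_succ_sub {K : Type*} [Field K] [CharZero K] (n : ℕ) :
    4 ^ (n + 1) * (centralBinom (n + 1) : K)⁻¹ - 4 ^ n * (centralBinom n : K)⁻¹ =
      4 ^ (n + 1) / (2 * (n + 1 : ℕ)) * (centralBinom (n + 1) : K)⁻¹ := by
  have hrec : ((n + 1 : ℕ) : K) * centralBinom (n + 1) = 2 * (2 * n + 1) * centralBinom n := by
    exact_mod_cast succ_mul_centralBinom_succ n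
  have hc : (centralBinom n : K) ≠ 0 := by exact_mod_cast (centralBinom_pos n).ne'
  have hc' : (centralBinom (n + 1) : K) ≠ 0 := by exact_mod_cast (centralBinom_pos (n + 1)).ne'
  have hn : ((n + 1 : ℕ) : K) ≠ 0 := by exact_mod_cast succ_ne_zero n
  field_simp
  push_cast at hrec ⊢
  linear_combination (-2 * (4 : K) ^ n) * hrec

theorem stmt_19_general (n : ℕ) :
    ∑ k ∈ Finset.Icc 1 n, (4 : ℚ) ^ k / (2 * k) * (((2 * k).choose k : ℚ))⁻¹ =
      4 ^ n * (((2 * n).choose n : ℚ))⁻¹ - 1 := by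
  induction n with
  | zero => simp
  | succ n ih =>
    rw [Finset.sum_Icc_succ_top (by omega), ih]
    have step := four_pow_mul_centralBinom_inv_succ_sub (K := ℚ) n
    simp only [centralBinom] at step
    push_cast at step ⊢
    linarith

theorem stmt_19 (n : ℕ) (hn : 0 < n) :
    ∑ k ∈ Finset.Icc 1 n, (4 : ℚ) ^ k / (2 * k) * (((2 * k).choose k : ℚ))⁻¹ =
      4 ^ n * (((2 * n).choose n : ℚ))⁻¹ - 1 :=
  stmt_19_general n
end
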